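/- arXiv:math/0505146 — 8 statements merged into one kernel-verified Lean document; each statement's English description precedes it below -/
import Mathlib

section
/- Let s ≥ 0 be an integer, d > 0 a real number, and M_1, …, M_{s+1} positive real numbers; set M_0 = 0. Then (s+1)·d·∏_{i=1}^{s} M_i ≤ ∏_{i=1}^{s+1} max(M_i, M_{i-1} + d). -/
/-!
Induction on `s`. Write `P s = ∏_{i ≤ s} M i` and `Q s = ∏_{i ≤ s} max (M i) (M (i-1) + d)`.
Termwise `P s ≤ Q s`, and the last factor of `Q (s+2)` is at least `M (s+1) + d`, so
`Q (s+2) ≥ Q (s+1) · M (s+1) + d · Q (s+1) ≥ (s+1) d P (s+1) + d P (s+1)`.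
-/

open Finset

section
variable {M : ℕ → ℝ} {d : ℝ}

lemma prod_Icc_le_prod_max_add {n : ℕ} (hM : ∀ i ∈ Icc 1 n, 0 ≤ M i) :
    ∏ i ∈ Icc 1 n, M i ≤ ∏ i ∈ Icc 1 n, max (M i) (M (i - 1) + d) :=
  prod_le_prod hM fun _ _ => le_max_left _ _

theorem succ_mul_prod_Icc_le_prod_max_add (hd : 0 ≤ d) (hM0 : M 0 = 0) :
    ∀ s : ℕ, (∀ i ∈ Icc 1 s, 0 ≤ M i) →
      (s + 1 : ℝ) * d * ∏ i ∈ Icc 1 s, M i ≤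
        ∏ i ∈ Icc 1 (s + 1), max (M i) (M (i - 1) + d)
  | 0, _ => by simp [hM0]
  | n + 1, hM => by
    have hM' : ∀ i ∈ Icc 1 n, 0 ≤ M i := fun i hi =>
      hM i (Icc_subset_Icc_right n.le_succ hi)
    have ih := succ_mul_prod_Icc_le_prod_max_add hd hM0 n hM'
    have hP : ∏ i ∈ Icc 1 (n + 1), M i ≤ ∏ i ∈ Icc 1 (n + 1), max (M i) (M (i - 1) + d) :=
      prod_Icc_le_prod_max_add hM
    set P := ∏ i ∈ Icc 1 n, M i
    set Q := ∏ i ∈ Icc 1 (n + 1), max (M i) (M (i - 1) + d)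
    have hQ : 0 ≤ Q := (mul_nonneg (by positivity) (prod_nonneg hM')).trans ih
    have hMn : 0 ≤ M (n + 1) := hM (n + 1) (by simp)
    rw [prod_Icc_succ_top (by omega)] at hP ⊢
    rw [prod_Icc_succ_top (by omega), Nat.add_sub_cancel]
    push_cast
    calc (n + 1 + 1 : ℝ) * d * (P * M (n + 1))
        = (n + 1) * d * P * M (n + 1) + d * (P * M (n + 1)) := by ring
      _ ≤ Q * M (n + 1) + d * Q := by gcongr
      _ = Q * (M (n + 1) + d) := by ring
      _ ≤ Q * max (M (n + 1 + 1)) (M (n + 1) + d) := by gcongr; exact le_max_right _ _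

end

/-- The numerical inequality underlying Theorem 1 (upper bound):
for `s ≥ 0`, `d > 0` and positive reals `M 1, …, M (s+1)` with `M 0 = 0`,
`(s+1) · d · ∏_{i=1}^{s} M i ≤ ∏_{i=1}^{s+1} max (M i) (M (i-1) + d)`. -/
theorem multiplicity_upper_bound_regular_element (s : ℕ) (d : ℝ) (hd : 0 < d)
    (M : ℕ → ℝ) (hM0 : M 0 = 0) (hMpos : ∀ i, 1 ≤ i → i ≤ s + 1 → 0 < M i) :
    (s + 1 : ℝ) * d * ∏ i ∈ Finset.Icc 1 s, M i ≤
      ∏ i ∈ Finset.Icc 1 (s + 1), max (M i) (M (i - 1) + d) :=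
  succ_mul_prod_Icc_le_prod_max_add hd.le hM0 s fun i hi =>
    (hMpos i (mem_Icc.mp hi).1 (Nat.le_succ_of_le (mem_Icc.mp hi).2)).le
end

section
/- Let s ≥ 0 be an integer, d > 0 a real number, and m_1, …, m_{s+1} positive real numbers; set m_0 = 0. Then (s+1)·d·∏_{i=1}^{s} m_i ≥ ∏_{i=1}^{s+1} min(m_i, m_{i-1} + d). -/
open Finset

/-- Induction on `n`: bounding the last factor by `m (n+1) + d` splits the product into a part
controlled by the induction hypothesis and a part `d · ∏ a ≤ d · ∏ m`. -/
theorem prod_Icc_le_succ_mul_prod_Icc {a m : ℕ → ℝ} {d : ℝ} (hd : 0 ≤ d) (hm0 : m 0 = 0) :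
    ∀ n : ℕ, (∀ i ∈ Icc 1 (n + 1), 0 ≤ a i) → (∀ i ∈ Icc 1 n, a i ≤ m i) →
      (∀ i ∈ Icc 1 (n + 1), a i ≤ m (i - 1) + d) →
      ∏ i ∈ Icc 1 (n + 1), a i ≤ (n + 1 : ℝ) * d * ∏ i ∈ Icc 1 n, m i
  | 0, _, _, hsucc => by simpa [hm0] using hsucc 1 (by simp)
  | n + 1, ha, ham, hsucc => by
    have ha' : ∀ i ∈ Icc 1 (n + 1), 0 ≤ a i := fun i hi => ha i (Icc_subset_Icc_right (by omega) hi)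
    have ih := prod_Icc_le_succ_mul_prod_Icc hd hm0 n ha'
      (fun i hi => ham i (Icc_subset_Icc_right (by omega) hi))
      (fun i hi => hsucc i (Icc_subset_Icc_right (by omega) hi))
    have hP : 0 ≤ ∏ i ∈ Icc 1 (n + 1), a i := prod_nonneg ha'
    have hPM : ∏ i ∈ Icc 1 (n + 1), a i ≤ ∏ i ∈ Icc 1 (n + 1), m i := prod_le_prod ha' ham
    have hm : 0 ≤ m (n + 1) := (ha' (n + 1) (by simp)).trans (ham (n + 1) (by simp))
    have hlast : a (n + 2) ≤ m (n + 1) + d := hsucc (n + 2) (by simp)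
    have hsplit_m : ∏ i ∈ Icc 1 (n + 1), m i = (∏ i ∈ Icc 1 n, m i) * m (n + 1) :=
      prod_Icc_succ_top (by omega) m
    calc ∏ i ∈ Icc 1 (n + 1 + 1), a i = (∏ i ∈ Icc 1 (n + 1), a i) * a (n + 2) :=
          prod_Icc_succ_top (by omega) a
      _ ≤ (∏ i ∈ Icc 1 (n + 1), a i) * m (n + 1) + (∏ i ∈ Icc 1 (n + 1), a i) * d := by
          rw [← mul_add]; exact mul_le_mul_of_nonneg_left hlast hP
      _ ≤ (n + 1 : ℝ) * d * (∏ i ∈ Icc 1 n, m i) * m (n + 1) +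
            (∏ i ∈ Icc 1 (n + 1), m i) * d := by
          gcongr
      _ = ((n + 1 : ℕ) + 1 : ℝ) * d * ∏ i ∈ Icc 1 (n + 1), m i := by
          rw [hsplit_m]; push_cast; ring

/-- The numerical inequality underlying Theorem 1 (lower bound):
for `s ≥ 0`, `d > 0` and positive reals `m 1, …, m (s+1)` with `m 0 = 0`,
`(s+1) · d · ∏_{i=1}^{s} m i ≥ ∏_{i=1}^{s+1} min (m i) (m (i-1) + d)`. -/
theorem multiplicity_lower_bound_regular_element (s : ℕ) (d : ℝ) (hd : 0 < d)
    (m : ℕ → ℝ) (hm0 : m 0 = 0) (hmpos : ∀ i, 1 ≤ i → i ≤ s + 1 → 0 < m i) :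
    (s + 1 : ℝ) * d * ∏ i ∈ Finset.Icc 1 s, m i ≥
      ∏ i ∈ Finset.Icc 1 (s + 1), min (m i) (m (i - 1) + d) := by
  have hm_nonneg : ∀ i ≤ s, 0 ≤ m i := fun i hi => by
    rcases Nat.eq_zero_or_pos i with rfl | hi0
    · exact hm0.ge
    · exact (hmpos i hi0 (by omega)).le
  refine prod_Icc_le_succ_mul_prod_Icc hd.le hm0 s (fun i hi => ?_)
    (fun i _ => min_le_left _ _) (fun i _ => min_le_right _ _)
  rw [mem_Icc] at hi
  exact le_min (hmpos i hi.1 hi.2).le (by linarith [hm_nonneg (i - 1) (by omega)])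
end

section
/- Let 0 ≤ j ≤ s be integers, let z_j ≥ 0 be a real number, and let z_{j+1}, …, z_s be real numbers with −i < z_i < 0 for each i = j+1, …, s. Then s + 1 ≤ ((j+1) + z_j) · ∏_{i=j+1}^{s} (1 + 1/(i + z_i)). -/
/-! Lowering `(j + 1) + z j` to `j + 1` and each `i + z i` to `i` can only decrease the right-hand
side, and the resulting product telescopes: `(j + 1) * ∏ (i + 1) / i = s + 1`. -/

open Finset

theorem natCast_add_one_mul_prod_Icc_one_add_inv {j s : ℕ} (hjs : j ≤ s) :
    ((j : ℝ) + 1) * ∏ i ∈ Icc (j + 1) s, (1 + 1 / (i : ℝ)) = s + 1 := by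
  induction s, hjs using Nat.le_induction with
  | base => simp
  | succ n hjn ih =>
    rw [prod_Icc_succ_top (by omega), ← mul_assoc, ih]
    push_cast
    field_simp

/-- The key estimate in Case 2 of the proof of Theorem 1:
for integers `0 ≤ j ≤ s`, a real `z j ≥ 0` and reals `z i` with `-i < z i < 0`
for `i = j+1, …, s`, one has
`s + 1 ≤ ((j+1) + z j) · ∏_{i=j+1}^{s} (1 + 1/(i + z i))`. -/
theorem case_two_key_estimate (s j : ℕ) (hjs : j ≤ s) (z : ℕ → ℝ) (hzj : 0 ≤ z j)
    (hz : ∀ i, j + 1 ≤ i → i ≤ s → -(i : ℝ) < z i ∧ z i < 0) :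
    (s + 1 : ℝ) ≤ ((j + 1 : ℝ) + z j) *
      ∏ i ∈ Finset.Icc (j + 1) s, (1 + 1 / ((i : ℝ) + z i)) := by
  rw [← natCast_add_one_mul_prod_Icc_one_add_inv hjs]
  gcongr ?_ * ∏ i ∈ _, (1 + 1 / ?_) with i hi
  · linarith
  all_goals
    obtain ⟨hi₁, hi₂⟩ := mem_Icc.mp hi
    obtain ⟨hlow, hneg⟩ := hz i hi₁ hi₂
    linarith
end

section
/- Let 0 ≤ j ≤ s be integers, let z_j ≤ 0 be a real number, and let z_{j+1}, …, z_s be real numbers with z_i ≥ 0 for each i = j+1, …, s. Then ((j+1) + z_j) · ∏_{i=j+1}^{s} (1 + 1/(i + z_i)) ≤ s + 1. -/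
open Finset

theorem mul_prod_Icc_one_add_one_div (j s : ℕ) (hjs : j ≤ s) :
    ((j : ℝ) + 1) * ∏ i ∈ Icc (j + 1) s, (1 + 1 / (i : ℝ)) = s + 1 := by
  induction s, hjs using Nat.le_induction with
  | base => simp
  | succ s _ ih =>
    rw [prod_Icc_succ_top (by omega), ← mul_assoc, ih]
    push_cast
    field_simp

theorem prod_Icc_one_add_one_div_add_le (j s : ℕ) (z : ℕ → ℝ)
    (hz : ∀ i, j + 1 ≤ i → i ≤ s → 0 ≤ z i) :
    ∏ i ∈ Icc (j + 1) s, (1 + 1 / ((i : ℝ) + z i)) ≤ ∏ i ∈ Icc (j + 1) s, (1 + 1 / (i : ℝ)) := by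
  refine prod_le_prod (fun i hi => ?_) (fun i hi => ?_) <;> rw [mem_Icc] at hi
  · have := hz i hi.1 hi.2
    positivity
  · have hi_pos : (0 : ℝ) < i := by exact_mod_cast (by omega : 0 < i)
    gcongr
    linarith [hz i hi.1 hi.2]

/-- The dual key estimate used in the lower-bound half of the proof of Theorem 1:
for integers `0 ≤ j ≤ s`, a real `z j ≤ 0` and reals `z i ≥ 0` for
`i = j+1, …, s`, one has
`((j+1) + z j) · ∏_{i=j+1}^{s} (1 + 1/(i + z i)) ≤ s + 1`. -/
theorem case_two_dual_key_estimate (s j : ℕ) (hjs : j ≤ s) (z : ℕ → ℝ) (hzj : z j ≤ 0)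
    (hz : ∀ i, j + 1 ≤ i → i ≤ s → 0 ≤ z i) :
    ((j + 1 : ℝ) + z j) * ∏ i ∈ Finset.Icc (j + 1) s, (1 + 1 / ((i : ℝ) + z i)) ≤
      (s + 1 : ℝ) := by
  have hprod_nonneg : 0 ≤ ∏ i ∈ Icc (j + 1) s, (1 + 1 / ((i : ℝ) + z i)) :=
    prod_nonneg fun i hi => by
      have := hz i (mem_Icc.1 hi).1 (mem_Icc.1 hi).2
      positivity
  calc ((j + 1 : ℝ) + z j) * ∏ i ∈ Icc (j + 1) s, (1 + 1 / ((i : ℝ) + z i))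
      ≤ (j + 1 : ℝ) * ∏ i ∈ Icc (j + 1) s, (1 + 1 / ((i : ℝ) + z i)) :=
        mul_le_mul_of_nonneg_right (by linarith) hprod_nonneg
    _ ≤ (j + 1 : ℝ) * ∏ i ∈ Icc (j + 1) s, (1 + 1 / (i : ℝ)) :=
        mul_le_mul_of_nonneg_left (prod_Icc_one_add_one_div_add_le j s z hz) (by positivity)
    _ = s + 1 := mul_prod_Icc_one_add_one_div j s hjs
end

section
/- Let s ≥ 1 be an integer, d > 0 a real number, and M_1, …, M_{s+1} positive real numbers; set M_0 = 0. Then equality (s+1)·d·∏_{i=1}^{s} M_i = ∏_{i=1}^{s+1} max(M_i, M_{i-1} + d) holds if and only if M_i = i·d for all i = 1, …, s and M_{s+1} ≤ (s+1)·d. -/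
/-!
Write `E i = max (M i) (M (i - 1) + d)`. For `B n = max (n d) (M n)` one has
`B (n+1) · M n ≤ B n · E (n+1)`, since `((n+1) d) · M n ≤ max (n d) (M n) · (M n + d)`
with equality only when `M n = n d`. Multiplying these steps gives
`B (s+1) · ∏_{i ≤ s} M i ≤ ∏_{i ≤ s+1} E i`, so equality in the theorem forces
`M (s+1) ≤ (s+1) d` and equality in every step; going down from `s`, each step then
forces `M n = n d`.
-/

open Finset

section Scalar

variable {a b c d : ℝ}

theorem max_mul_le_max_mul_max (ha : 0 ≤ a) (hc : 0 ≤ c) (hd : 0 ≤ d) :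
    max (c + d) b * a ≤ max c a * max b (a + d) := by
  have hmax : 0 ≤ max c a := le_max_of_le_left hc
  rcases le_total b (c + d) with hb | hb
  · have hstep : (c + d) * a ≤ max c a * (a + d) := by
      rcases le_total a c with hac | hca
      · rw [max_eq_left hac]; nlinarith
      · rw [max_eq_right hca]; nlinarith
    rw [max_eq_left hb]
    exact hstep.trans (mul_le_mul_of_nonneg_left (le_max_right _ _) hmax)
  · rw [max_eq_right hb, mul_comm]
    exact mul_le_mul (le_max_right _ _) (le_max_left _ _) (by linarith) hmax

theorem eq_of_max_mul_add_le (ha : 0 < a) (hd : 0 < d)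
    (h : max c a * (a + d) ≤ (c + d) * a) : a = c := by
  rcases le_total a c with hac | hca
  · rw [max_eq_left hac] at h
    exact le_antisymm hac (le_of_mul_le_mul_left (by linarith) hd)
  · rw [max_eq_right hca] at h
    exact le_antisymm (le_of_mul_le_mul_left (by linarith) ha) hca

end Scalar

section Products

variable {M : ℕ → ℝ} {d : ℝ}

theorem max_mul_prod_le_prod_max (hd : 0 ≤ d) (hM0 : 0 ≤ M 0) {n : ℕ}
    (hM : ∀ i, 1 ≤ i → i ≤ n + 1 → 0 ≤ M i) :
    max (((n : ℝ) + 1) * d) (M (n + 1)) * ∏ i ∈ Icc 1 n, M i ≤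
      ∏ i ∈ Icc 1 (n + 1), max (M i) (M (i - 1) + d) := by
  induction n with
  | zero =>
    simpa [max_comm d] using max_le_max_left (M 1) (by linarith : d ≤ M 0 + d)
  | succ n ih =>
    have hP : 0 ≤ ∏ i ∈ Icc 1 n, M i :=
      prod_nonneg fun i hi => hM i (mem_Icc.1 hi).1 (by grind)
    have hE : 0 ≤ max (M (n + 2)) (M (n + 1) + d) :=
      le_max_of_le_right (add_nonneg (hM _ (by omega) (by omega)) hd)
    have hstep := max_mul_le_max_mul_max (b := M (n + 2)) (hM (n + 1) (by omega) (by omega))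
      (by positivity : 0 ≤ ((n : ℝ) + 1) * d) hd
    rw [prod_Icc_succ_top (by omega), prod_Icc_succ_top (by omega : 1 ≤ n + 1 + 1),
      Nat.add_sub_cancel]
    calc max ((((n + 1 : ℕ) : ℝ) + 1) * d) (M (n + 1 + 1)) * ((∏ i ∈ Icc 1 n, M i) * M (n + 1))
        = max (((n : ℝ) + 1) * d + d) (M (n + 2)) * M (n + 1) * ∏ i ∈ Icc 1 n, M i := by
          push_cast; ring_nf
      _ ≤ max (((n : ℝ) + 1) * d) (M (n + 1)) * max (M (n + 2)) (M (n + 1) + d) *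
            ∏ i ∈ Icc 1 n, M i := mul_le_mul_of_nonneg_right hstep hP
      _ = max (M (n + 2)) (M (n + 1) + d) *
            (max (((n : ℝ) + 1) * d) (M (n + 1)) * ∏ i ∈ Icc 1 n, M i) := by ring
      _ ≤ max (M (n + 2)) (M (n + 1) + d) * ∏ i ∈ Icc 1 (n + 1), max (M i) (M (i - 1) + d) :=
          mul_le_mul_of_nonneg_left (ih fun i h₁ h₂ => hM i h₁ (by omega)) hE
      _ = _ := mul_comm _ _

theorem le_of_prod_max_eq (hd : 0 ≤ d) (hM0 : 0 ≤ M 0) {n : ℕ}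
    (hM : ∀ i, 1 ≤ i → i ≤ n + 1 → 0 < M i)
    (h : ∏ i ∈ Icc 1 (n + 1), max (M i) (M (i - 1) + d) = ((n : ℝ) + 1) * d * ∏ i ∈ Icc 1 n, M i) :
    M (n + 1) ≤ ((n : ℝ) + 1) * d := by
  have hP : 0 < ∏ i ∈ Icc 1 n, M i := prod_pos fun i hi => hM i (mem_Icc.1 hi).1 (by grind)
  have hle := max_mul_prod_le_prod_max hd hM0 fun i h₁ h₂ => (hM i h₁ h₂).le
  rw [h] at hle
  exact (le_max_right _ _).trans (le_of_mul_le_mul_right hle hP)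

theorem eq_mul_of_prod_max_eq (hd : 0 < d) (hM0 : 0 ≤ M 0) {n : ℕ}
    (hM : ∀ i, 1 ≤ i → i ≤ n + 1 → 0 < M i)
    (h : ∏ i ∈ Icc 1 (n + 1), max (M i) (M (i - 1) + d) = ((n : ℝ) + 1) * d * ∏ i ∈ Icc 1 n, M i) :
    ∀ i, 1 ≤ i → i ≤ n → M i = i * d := by
  induction n with
  | zero => intro i h₁ h₂; omega
  | succ n ih =>
    have hlast := le_of_prod_max_eq hd.le hM0 hM h
    rw [prod_Icc_succ_top (by omega) fun i => max (M i) (M (i - 1) + d),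
      prod_Icc_succ_top (by omega) M, Nat.add_sub_cancel] at h
    have hcd : (((n + 1 : ℕ) : ℝ) + 1) * d = ((n : ℝ) + 1) * d + d := by push_cast; ring
    rw [hcd] at h hlast
    set a := M (n + 1) with ha_def
    set c := ((n : ℝ) + 1) * d with hc_def
    set P := ∏ i ∈ Icc 1 n, M i
    set Q := ∏ i ∈ Icc 1 (n + 1), max (M i) (M (i - 1) + d)
    have ha : 0 < a := hM (n + 1) (by omega) (by omega)
    have hP : 0 < P := prod_pos fun i hi => hM i (mem_Icc.1 hi).1 (by grind)
    have hQ : max c a * P ≤ Q :=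
      max_mul_prod_le_prod_max hd.le hM0 fun i h₁ h₂ => (hM i h₁ (by omega)).le
    have hac : a = c := by
      refine eq_of_max_mul_add_le ha hd (le_of_mul_le_mul_right ?_ hP)
      calc max c a * (a + d) * P = max c a * P * (a + d) := by ring
        _ ≤ Q * max (M (n + 1 + 1)) (a + d) :=
          mul_le_mul hQ (le_max_right _ _) (by positivity)
            ((by positivity : (0 : ℝ) ≤ max c a * P).trans hQ)
        _ = (c + d) * a * P := by rw [h]; ring
    have hQc : Q = c * P := by
      rw [hac, max_eq_right hlast] at h
      exact mul_right_cancel₀ (by positivity : c + d ≠ 0) (h.trans (by ring))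
    intro i h₁ h₂
    rcases (show i ≤ n ∨ i = n + 1 by omega) with hi | rfl
    · exact ih (fun i h₁ h₂ => hM i h₁ (by omega)) hQc i h₁ hi
    · rw [← ha_def, hac, hc_def]; push_cast; ring

theorem prod_max_eq_of_eq_mul {n : ℕ} (hM : ∀ i ≤ n, M i = i * d)
    (hlast : M (n + 1) ≤ ((n : ℝ) + 1) * d) :
    ∏ i ∈ Icc 1 (n + 1), max (M i) (M (i - 1) + d) = ((n : ℝ) + 1) * d * ∏ i ∈ Icc 1 n, M i := by
  have hfactor : ∀ i ∈ Icc 1 n, max (M i) (M (i - 1) + d) = M i := fun i hi => by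
    obtain ⟨h₁, h₂⟩ := mem_Icc.1 hi
    rw [hM (i - 1) (by omega), Nat.cast_pred h₁, hM i h₂, sub_one_mul, sub_add_cancel, max_self]
  rw [prod_Icc_succ_top (by omega), prod_congr rfl hfactor, Nat.add_sub_cancel, hM n le_rfl,
    max_eq_right (by linarith), mul_comm]
  ring

end Products

theorem multiplicity_upper_bound_equality_case_general (s : ℕ) (d : ℝ) (hd : 0 < d)
    (M : ℕ → ℝ) (hM0 : M 0 = 0) (hMpos : ∀ i, 1 ≤ i → i ≤ s + 1 → 0 < M i) :
    (s + 1 : ℝ) * d * ∏ i ∈ Finset.Icc 1 s, M i =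
        ∏ i ∈ Finset.Icc 1 (s + 1), max (M i) (M (i - 1) + d) ↔
      (∀ i, 1 ≤ i → i ≤ s → M i = i * d) ∧ M (s + 1) ≤ (s + 1) * d := by
  constructor
  · intro h
    exact ⟨eq_mul_of_prod_max_eq hd hM0.ge hMpos h.symm, le_of_prod_max_eq hd.le hM0.ge hMpos h.symm⟩
  · rintro ⟨hM, hlast⟩
    refine (prod_max_eq_of_eq_mul (fun i hi => ?_) hlast).symm
    rcases Nat.eq_zero_or_pos i with rfl | hi₀
    · simp [hM0]
    · exact hM i hi₀ hi

/-- Equality case (Remark (b)): for `s ≥ 1`, `d > 0` and positive reals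
`M 1, …, M (s+1)` with `M 0 = 0`, equality
`(s+1) · d · ∏_{i=1}^{s} M i = ∏_{i=1}^{s+1} max (M i) (M (i-1) + d)`
holds if and only if `M i = i·d` for all `i = 1, …, s` and `M (s+1) ≤ (s+1)·d`. -/
theorem multiplicity_upper_bound_equality_case (s : ℕ) (hs : 1 ≤ s) (d : ℝ) (hd : 0 < d)
    (M : ℕ → ℝ) (hM0 : M 0 = 0) (hMpos : ∀ i, 1 ≤ i → i ≤ s + 1 → 0 < M i) :
    (s + 1 : ℝ) * d * ∏ i ∈ Finset.Icc 1 s, M i =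
        ∏ i ∈ Finset.Icc 1 (s + 1), max (M i) (M (i - 1) + d) ↔
      (∀ i, 1 ≤ i → i ≤ s → M i = i * d) ∧ M (s + 1) ≤ (s + 1) * d :=
  multiplicity_upper_bound_equality_case_general s d hd M hM0 hMpos
end

section
/- Fix integers r ≥ 0 and m ≥ 1 and positive real numbers u_{i,j} for 1 ≤ i ≤ r+1 and 1 ≤ j ≤ m such that u_{1,j} ≥ u_{2,j} ≥ ⋯ ≥ u_{r+1,j} for every j, and u_{i,j} ≥ u_{i+1,j-1} for all 1 ≤ i ≤ r and 2 ≤ j ≤ m. Then (r+1)! · Σ_{1 ≤ j_1 ≤ j_2 ≤ ⋯ ≤ j_{r+1} ≤ m} ∏_{i=1}^{r+1} u_{i,j_i} ≤ ∏_{k=0}^{r} ( Σ_{j=1}^{m-1} u_{1,j} + Σ_{i=1}^{k+1} u_{i,m} ). -/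
/-!
Write `S(n, m)` for the sum over weakly increasing `j : Fin n → Fin m` of `∏ᵢ v i (j i)`.
Splitting according to whether the last index equals the last column gives
`S(n+1, m+1) = S(n+1, m) + v n m · S(n, m+1)`, and the bound is proved by induction on `n`
and `m`. With `M k` the maximal shifts of the table with `m + 1` columns and `M' k` those of the
table with `m` columns, the step reduces to
`∏_{k ≤ n} M' k + (n+1) · v n m · ∏_{k < n} M k ≤ ∏_{k ≤ n} M k`,
which holds because `M' (k+1) ≤ M k` (the diagonal condition), and `M' 0 + v n m ≤ M 0`,
`M 0 + n · v n m ≤ M n` (the column condition).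
-/

open Finset Nat

theorem Fin.monotone_snoc {α : Type*} [Preorder α] {n : ℕ} {g : Fin n → α} {x : α}
    (hg : Monotone g) (hx : ∀ i, g i ≤ x) : Monotone (Fin.snoc g x : Fin (n + 1) → α) := by
  intro a b hab
  induction b using Fin.lastCases with
  | last =>
    induction a using Fin.lastCases with
    | last => exact le_rfl
    | cast a => simpa using hx a
  | cast b =>
    induction a using Fin.lastCases with
    | last => exact absurd hab (Fin.castSucc_lt_last b).not_ge
    | cast a => simpa using hg (Fin.castSucc_le_castSucc_iff.mp hab)

theorem sum_Icc_one_eq_sum_range {M : Type*} [AddCommMonoid M] (f : ℕ → M) (n : ℕ) :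
    ∑ i ∈ Icc 1 n, f i = ∑ i ∈ range n, f (i + 1) := by
  rw [range_eq_Ico, sum_Ico_add' f, zero_add, Ico_add_one_right_eq_Icc]

theorem prod_add_mul_prod_le {n : ℕ} {M M' : ℕ → ℝ} {w : ℝ}
    (hM' : ∀ k ≤ n, 0 ≤ M' k) (hshift : ∀ k < n, M' (k + 1) ≤ M k)
    (hfirst : M' 0 + w ≤ M 0) (hlast : M 0 + n * w ≤ M n) :
    ∏ k ∈ range (n + 1), M' k + (n + 1) * w * ∏ k ∈ range n, M k ≤
      ∏ k ∈ range (n + 1), M k := by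
  have hM'_succ (k) (hk : k ∈ range n) : 0 ≤ M' (k + 1) := hM' (k + 1) (mem_range.mp hk)
  have hP : 0 ≤ ∏ k ∈ range n, M k :=
    prod_nonneg fun k hk => (hM'_succ k hk).trans (hshift k (mem_range.mp hk))
  have htail : ∏ k ∈ range n, M' (k + 1) ≤ ∏ k ∈ range n, M k :=
    prod_le_prod hM'_succ fun k hk => hshift k (mem_range.mp hk)
  calc ∏ k ∈ range (n + 1), M' k + (n + 1) * w * ∏ k ∈ range n, M k
      = (∏ k ∈ range n, M' (k + 1)) * M' 0 + (n + 1) * w * ∏ k ∈ range n, M k := by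
        rw [prod_range_succ']
    _ ≤ (∏ k ∈ range n, M k) * (M 0 - w) + (n + 1) * w * ∏ k ∈ range n, M k := by
        gcongr
        · exact hM' 0 (Nat.zero_le n)
        · linarith
    _ = (M 0 + n * w) * ∏ k ∈ range n, M k := by ring
    _ ≤ M n * ∏ k ∈ range n, M k := by gcongr
    _ = ∏ k ∈ range (n + 1), M k := by rw [prod_range_succ, mul_comm]

open Classical in
noncomputable def monotoneProdSum (v : ℕ → ℕ → ℝ) (n m : ℕ) : ℝ :=
  ∑ f ∈ univ.filter (fun f : Fin n → Fin m => Monotone f), ∏ i : Fin n, v i (f i)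

open Classical in
theorem sum_monotone_last_eq_last (v : ℕ → ℕ → ℝ) (n m : ℕ) :
    ∑ f ∈ univ.filter
        (fun f : Fin (n + 1) → Fin (m + 1) => Monotone f ∧ f (.last n) = .last m),
      ∏ i : Fin (n + 1), v i (f i) = v n m * monotoneProdSum v n (m + 1) := by
  rw [monotoneProdSum, mul_sum]
  refine sum_bij' (fun f _ => Fin.init f) (fun g _ => Fin.snoc g (.last m)) ?_ ?_ ?_ ?_ ?_
  · simp only [mem_filter, mem_univ, true_and]
    exact fun f hf a b hab => hf.1 (Fin.castSucc_le_castSucc_iff.mpr hab)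
  · simp only [mem_filter, mem_univ, true_and]
    exact fun g hg => ⟨Fin.monotone_snoc hg fun i => Fin.le_last _, Fin.snoc_last _ _⟩
  · simp only [mem_filter, mem_univ, true_and]
    intro f hf
    rw [← hf.2, Fin.snoc_init_self]
  · exact fun g _ => Fin.init_snoc _ _
  · simp only [mem_filter, mem_univ, true_and]
    intro f hf
    rw [Fin.prod_univ_castSucc, hf.2, mul_comm]
    simp [Fin.init]

open Classical in
theorem sum_monotone_last_ne_last (v : ℕ → ℕ → ℝ) (n m : ℕ) :
    ∑ f ∈ univ.filter
        (fun f : Fin (n + 1) → Fin (m + 1) => Monotone f ∧ f (.last n) ≠ .last m),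
      ∏ i : Fin (n + 1), v i (f i) = monotoneProdSum v (n + 1) m := by
  have hne {f : Fin (n + 1) → Fin (m + 1)} (hf : Monotone f ∧ f (.last n) ≠ .last m) (k) :
      f k ≠ .last m :=
    ((hf.1 (Fin.le_last k)).trans_lt (Fin.lt_last_iff_ne_last.mpr hf.2)).ne
  rw [monotoneProdSum]
  refine sum_bij' (fun f hf k => (f k).castPred (hne (mem_filter.mp hf).2 k))
    (fun g _ k => (g k).castSucc) ?_ ?_ ?_ ?_ ?_
  · simp only [mem_filter, mem_univ, true_and]
    exact fun f hf a b hab => Fin.castPred_le_castPred_iff.mpr (hf.1 hab)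
  · simp only [mem_filter, mem_univ, true_and]
    exact fun g hg => ⟨Fin.strictMono_castSucc.monotone.comp hg, Fin.castSucc_ne_last _⟩
  · exact fun f _ => funext fun k => Fin.castSucc_castPred _ _
  · exact fun g _ => funext fun k => Fin.castPred_castSucc _
  · exact fun f _ => rfl

theorem monotoneProdSum_succ_succ (v : ℕ → ℕ → ℝ) (n m : ℕ) :
    monotoneProdSum v (n + 1) (m + 1) =
      monotoneProdSum v (n + 1) m + v n m * monotoneProdSum v n (m + 1) := by
  classical
  conv_lhs => rw [monotoneProdSum,
    ← sum_filter_add_sum_filter_not _ (fun f => f (.last n) = .last m), filter_filter,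
    filter_filter, sum_monotone_last_eq_last, sum_monotone_last_ne_last]
  exact add_comm _ _

theorem monotoneProdSum_zero_left (v : ℕ → ℕ → ℝ) (m : ℕ) :
    monotoneProdSum v 0 m = 1 := by
  classical
  simp [monotoneProdSum, Subsingleton.monotone]

theorem monotoneProdSum_succ_zero (v : ℕ → ℕ → ℝ) (n : ℕ) :
    monotoneProdSum v (n + 1) 0 = 0 := by
  simp [monotoneProdSum]

theorem factorial_mul_monotoneProdSum_succ_succ (v : ℕ → ℕ → ℝ) (n m : ℕ) :
    ((n + 1)! : ℝ) * monotoneProdSum v (n + 1) (m + 1) =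
      (n + 1)! * monotoneProdSum v (n + 1) m +
        (n + 1) * v n m * (n ! * monotoneProdSum v n (m + 1)) := by
  rw [monotoneProdSum_succ_succ, Nat.factorial_succ]
  push_cast
  ring

/-- Zero-indexed (`v i j = u (i+1) (j+1)`): for a table with `m + 1` columns this is the
maximal Eagon–Northcott shift `M_{k+1}`. -/
def maxShift (v : ℕ → ℕ → ℝ) (m k : ℕ) : ℝ :=
  ∑ j ∈ range m, v 0 j + ∑ i ∈ range (k + 1), v i m

structure MinorWeights (v : ℕ → ℕ → ℝ) (n m : ℕ) : Prop where
  nonneg : ∀ i j, i < n → j ≤ m → 0 ≤ v i j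
  col_antitone : ∀ i j, i + 1 < n → j ≤ m → v (i + 1) j ≤ v i j
  diag_le : ∀ i j, i + 1 < n → j < m → v (i + 1) j ≤ v i (j + 1)

namespace MinorWeights

variable {v : ℕ → ℕ → ℝ} {n m : ℕ}

theorem of_succ_rows (h : MinorWeights v (n + 1) m) : MinorWeights v n m :=
  ⟨fun i j hi hj => h.nonneg i j (by omega) hj,
    fun i j hi hj => h.col_antitone i j (by omega) hj,
    fun i j hi hj => h.diag_le i j (by omega) hj⟩

theorem of_succ_cols (h : MinorWeights v n (m + 1)) : MinorWeights v n m :=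
  ⟨fun i j hi hj => h.nonneg i j hi (by omega),
    fun i j hi hj => h.col_antitone i j hi (by omega),
    fun i j hi hj => h.diag_le i j hi (by omega)⟩

theorem le_of_le_row (h : MinorWeights v n m) {i i' j : ℕ} (hii' : i ≤ i') (hi' : i' < n)
    (hj : j ≤ m) : v i' j ≤ v i j := by
  induction i', hii' using Nat.le_induction with
  | base => exact le_rfl
  | succ k hik ih => exact (h.col_antitone k j hi' hj).trans (ih (by omega))

theorem maxShift_nonneg (h : MinorWeights v n m) {k : ℕ} (hk : k < n) : 0 ≤ maxShift v m k :=
  add_nonneg (sum_nonneg fun j hj => h.nonneg 0 j (by omega) (mem_range.mp hj).le)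
    (sum_nonneg fun i hi => h.nonneg i m (by have := mem_range.mp hi; omega) le_rfl)

theorem maxShift_zero_add_le (h : MinorWeights v (n + 1) m) :
    maxShift v m 0 + n * v n m ≤ maxShift v m n := by
  have hcol : n • v n m ≤ ∑ i ∈ range n, v (i + 1) m := by
    simpa using card_nsmul_le_sum (range n) (fun i => v (i + 1) m) (v n m)
      fun i hi => h.le_of_le_row (mem_range.mp hi) (Nat.lt_succ_self n) le_rfl
  rw [maxShift, maxShift, sum_range_succ' _ n, nsmul_eq_mul] at *
  simp only [zero_add, sum_range_one]
  linarith

theorem maxShift_add_le (h : MinorWeights v (n + 1) (m + 1)) :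
    maxShift v m 0 + v n (m + 1) ≤ maxShift v (m + 1) 0 := by
  have hcol := h.le_of_le_row (Nat.zero_le n) (Nat.lt_succ_self n) le_rfl
  rw [maxShift, maxShift, zero_add, sum_range_one, sum_range_one, sum_range_succ _ m]
  linarith

theorem maxShift_succ_le (h : MinorWeights v (n + 1) (m + 1)) {k : ℕ} (hk : k < n) :
    maxShift v m (k + 1) ≤ maxShift v (m + 1) k := by
  have hdiag : ∑ i ∈ range (k + 1), v (i + 1) m ≤ ∑ i ∈ range (k + 1), v i (m + 1) :=
    sum_le_sum fun i hi => h.diag_le i m (by have := mem_range.mp hi; omega) (Nat.lt_succ_self m)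
  simp only [maxShift, sum_range_succ' _ (k + 1), sum_range_succ _ m]
  linarith

end MinorWeights

theorem factorial_mul_monotoneProdSum_le {v : ℕ → ℕ → ℝ} {n m : ℕ}
    (h : MinorWeights v n m) :
    (n ! : ℝ) * monotoneProdSum v n (m + 1) ≤ ∏ k ∈ range n, maxShift v m k := by
  induction n generalizing m with
  | zero => simp [monotoneProdSum_zero_left]
  | succ n ihn =>
    induction m with
    | zero =>
      calc ((n + 1) ! : ℝ) * monotoneProdSum v (n + 1) (0 + 1)
          = ∏ _k ∈ range (n + 1), (0 : ℝ) +
              (n + 1) * v n 0 * (n ! * monotoneProdSum v n 1) := by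
            simp [factorial_mul_monotoneProdSum_succ_succ, monotoneProdSum_succ_zero]
        _ ≤ ∏ _k ∈ range (n + 1), (0 : ℝ) +
              (n + 1) * v n 0 * ∏ k ∈ range n, maxShift v 0 k := by
            gcongr
            · exact mul_nonneg (by positivity) (h.nonneg n 0 (Nat.lt_succ_self n) le_rfl)
            · exact ihn h.of_succ_rows
        _ ≤ ∏ k ∈ range (n + 1), maxShift v 0 k :=
            prod_add_mul_prod_le (fun _ _ => le_rfl)
              (fun k hk => h.maxShift_nonneg (Nat.lt_succ_of_lt hk))
              (by simpa [maxShift] using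
                h.le_of_le_row (Nat.zero_le n) (Nat.lt_succ_self n) le_rfl)
              h.maxShift_zero_add_le
    | succ m ihm =>
      calc ((n + 1) ! : ℝ) * monotoneProdSum v (n + 1) (m + 1 + 1)
          = (n + 1) ! * monotoneProdSum v (n + 1) (m + 1) +
              (n + 1) * v n (m + 1) * (n ! * monotoneProdSum v n (m + 1 + 1)) :=
            factorial_mul_monotoneProdSum_succ_succ v n (m + 1)
        _ ≤ ∏ k ∈ range (n + 1), maxShift v m k +
              (n + 1) * v n (m + 1) * ∏ k ∈ range n, maxShift v (m + 1) k := by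
            gcongr
            · exact ihm h.of_succ_cols
            · exact mul_nonneg (by positivity) (h.nonneg n (m + 1) (Nat.lt_succ_self n) le_rfl)
            · exact ihn h.of_succ_rows
        _ ≤ ∏ k ∈ range (n + 1), maxShift v (m + 1) k :=
            prod_add_mul_prod_le
              (fun k hk => h.of_succ_cols.maxShift_nonneg (Nat.lt_succ_of_le hk))
              (fun k hk => h.maxShift_succ_le hk) h.maxShift_add_le h.maxShift_zero_add_le

open Classical in
/-- The upper multiplicity bound for ideals of maximal minors: for positive reals
`u i j` (`1 ≤ i ≤ r+1`, `1 ≤ j ≤ m`) decreasing down each column and with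
`u i j ≥ u (i+1) (j-1)`, the Herzog–Trung multiplicity sum over weakly increasing
tuples `1 ≤ j₁ ≤ ⋯ ≤ j_{r+1} ≤ m` (encoded by monotone maps `Fin (r+1) → Fin m`)
satisfies
`(r+1)! · Σ ∏ᵢ u i jᵢ ≤ ∏_{k=0}^{r} (Σ_{j=1}^{m-1} u 1 j + Σ_{i=1}^{k+1} u i m)`. -/
theorem maximal_minors_upper_bound (r m : ℕ) (hm : 1 ≤ m) (u : ℕ → ℕ → ℝ)
    (hpos : ∀ i j, 1 ≤ i → i ≤ r + 1 → 1 ≤ j → j ≤ m → 0 < u i j)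
    (hcol : ∀ i j, 1 ≤ i → i ≤ r → 1 ≤ j → j ≤ m → u (i + 1) j ≤ u i j)
    (hdiag : ∀ i j, 1 ≤ i → i ≤ r → 2 ≤ j → j ≤ m → u (i + 1) (j - 1) ≤ u i j) :
    ((r + 1).factorial : ℝ) *
        ∑ f ∈ Finset.univ.filter (fun f : Fin (r + 1) → Fin m => Monotone f),
          ∏ i : Fin (r + 1), u ((i : ℕ) + 1) ((f i : ℕ) + 1) ≤
      ∏ k ∈ Finset.range (r + 1),
        ((∑ j ∈ Finset.Icc 1 (m - 1), u 1 j) + ∑ i ∈ Finset.Icc 1 (k + 1), u i m) := by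
  obtain ⟨m, rfl⟩ : ∃ m', m = m' + 1 := ⟨m - 1, by omega⟩
  have hv : MinorWeights (fun i j => u (i + 1) (j + 1)) (r + 1) m :=
    ⟨fun i j hi hj => (hpos _ _ (by omega) (by omega) (by omega) (by omega)).le,
      fun i j hi hj => hcol _ _ (by omega) (by omega) (by omega) (by omega),
      fun i j hi hj => hdiag (i + 1) (j + 2) (by omega) (by omega) (by omega) (by omega)⟩
  refine (factorial_mul_monotoneProdSum_le hv).trans_eq (prod_congr rfl fun k _ => ?_)
  simp only [maxShift, Nat.add_sub_cancel, sum_Icc_one_eq_sum_range]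
end

section
/- Fix integers r ≥ 0 and m ≥ 1 and positive real numbers u_{i,j} for 1 ≤ i ≤ r+1 and 1 ≤ j ≤ m such that u_{1,j} ≥ u_{2,j} ≥ ⋯ ≥ u_{r+1,j} for every j, and u_{i,j} ≥ u_{i+1,j-1} for all 1 ≤ i ≤ r and 2 ≤ j ≤ m. Then (r+1)! · Σ_{1 ≤ j_1 ≤ j_2 ≤ ⋯ ≤ j_{r+1} ≤ m} ∏_{i=1}^{r+1} u_{i,j_i} ≥ ∏_{k=0}^{r} ( Σ_{i=r+1-k}^{r+1} u_{i,1} + Σ_{j=2}^{m} u_{r+1,j} ). -/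
/-!
Induction on the number of rows. Let `h(x)` be the entry on the anti-diagonal `x` of the hook
formed by the first column and the last row. The `k = r` factor of the product is the full hook
sum `∑ₓ h(x)`, and the other factors form the same product for the array without its top row.
So it suffices that `(∑ₓ h(x)) · ∑_c ∏ⱼ u_{j+1, c j} ≤ (r + 1) · ∑_g ∏ᵢ u_{i, g i}`, the sums
running over weakly increasing `c` and `g`. Stars and bars gives an injection `(x, c) ↦ (t, g)`
with `x = g t + t` and `c = g` with its `t`-th entry removed; termwise, the anti-diagonal
condition gives `h(g t + t) ≤ u_{t, g t}` and the column condition handles the entries of `c`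
before position `t`, which sit one row lower than in `g`.
-/

open Finset
open scoped Nat

theorem Finset.sum_le_sum_of_injOn {ι κ M : Type*} [DecidableEq κ] [AddCommMonoid M]
    [PartialOrder M] [IsOrderedAddMonoid M] {s : Finset ι} {t : Finset κ} {f : ι → M}
    {g : κ → M} (e : ι → κ) (he : Set.InjOn e s) (hest : Set.MapsTo e s t)
    (hg : ∀ k ∈ t, 0 ≤ g k) (hfg : ∀ i ∈ s, f i ≤ g (e i)) : ∑ i ∈ s, f i ≤ ∑ k ∈ t, g k :=
  calc ∑ i ∈ s, f i ≤ ∑ i ∈ s, g (e i) := sum_le_sum hfg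
    _ = ∑ k ∈ s.image e, g k := (sum_image he).symm
    _ ≤ ∑ k ∈ t, g k :=
      sum_le_sum_of_subset_of_nonneg (image_subset_iff.2 hest) fun k hk _ ↦ hg k hk

theorem Fin.monotone_insertNth {n : ℕ} {α : Type*} [Preorder α] {f : Fin n → α}
    (hf : Monotone f) {p : Fin (n + 1)} {x : α} (hlo : ∀ i, i.castSucc < p → f i ≤ x)
    (hhi : ∀ i, p ≤ i.castSucc → x ≤ f i) :
    Monotone (Fin.insertNth (α := fun _ ↦ α) p x f) := by
  intro a b hab
  obtain ha | ⟨a, rfl⟩ := Fin.eq_self_or_eq_succAbove p a <;>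
    obtain hb | ⟨b, rfl⟩ := Fin.eq_self_or_eq_succAbove p b
  · rw [ha, hb]
  · rw [ha] at hab ⊢
    rw [insertNth_apply_same, insertNth_apply_succAbove]
    exact hhi b <| (lt_succAbove_iff_le_castSucc _ _).1 <| hab.lt_of_ne (succAbove_ne _ b).symm
  · rw [hb] at hab ⊢
    rw [insertNth_apply_same, insertNth_apply_succAbove]
    exact hlo a <| (succAbove_lt_iff_castSucc_lt _ _).1 <| hab.lt_of_ne (succAbove_ne _ a)
  · simpa using hf (succAbove_le_succAbove_iff.1 hab)

namespace MaximalMinors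

variable {n m : ℕ}

section StarsAndBars

/-- With `insertion`, the inverse of `(g, t) ↦ (g t + t, g ∘ t.succAbove)` on monotone `g`:
under `g ↦ (i ↦ g i + i)` it inserts `x` into a strictly increasing sequence, at the position
counting its entries below `x`. -/
def insertionIndex (x : ℕ) (c : Fin n → Fin m) : Fin (n + 1) :=
  ⟨#{j | (c j : ℕ) + j < x}, Nat.lt_succ_of_le <| (card_filter_le _ _).trans_eq (card_fin n)⟩

variable {x : ℕ} {c : Fin n → Fin m}

lemma lt_insertionIndex_iff (hc : Monotone c) (j : Fin n) :
    (j : ℕ) < insertionIndex x c ↔ (c j : ℕ) + j < x := by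
  have hsum : ∀ {i j : Fin n}, i ≤ j → (c i : ℕ) + i ≤ c j + j := fun h ↦ add_le_add (hc h) h
  change (j : ℕ) < #{j | (c j : ℕ) + j < x} ↔ _
  constructor
  · intro hj
    by_contra hjx
    have hsub : ({i | (c i : ℕ) + i < x} : Finset (Fin n)) ⊆ Iio j := fun i hi ↦ by
      simp only [mem_filter, mem_univ, true_and] at hi
      exact mem_Iio.2 <| lt_of_not_ge fun hji ↦ hjx <| (hsum hji).trans_lt hi
    have := card_le_card hsub
    rw [Fin.card_Iio] at this
    omega
  · intro hjx
    have hsub : Iic j ⊆ ({i | (c i : ℕ) + i < x} : Finset (Fin n)) := fun i hi ↦ by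
      simpa using (hsum (mem_Iic.1 hi)).trans_lt hjx
    have := card_le_card hsub
    rw [Fin.card_Iic] at this
    omega

lemma insertionIndex_le (hc : Monotone c) : (insertionIndex x c : ℕ) ≤ x := by
  by_contra! h
  have hxn : x < n := h.trans_le (Nat.lt_succ_iff.1 (insertionIndex x c).isLt)
  have := (lt_insertionIndex_iff hc ⟨x, hxn⟩).1 h
  simp only at this
  omega

lemma lt_insertionIndex_add (hc : Monotone c) (hx : x < n + m) :
    x < insertionIndex x c + m := by
  obtain h | h := (Nat.lt_succ_iff.1 (insertionIndex x c).isLt).lt_or_eq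
  · have hnot := (lt_insertionIndex_iff hc ⟨_, h⟩).not.1 (lt_irrefl _)
    have hlt := (c ⟨_, h⟩).isLt
    simp only at hnot hlt
    omega
  · omega

variable [NeZero m]

def insertionValue (x : ℕ) (c : Fin n → Fin m) : Fin m :=
  Fin.ofNat m (x - insertionIndex x c)

def insertion (x : ℕ) (c : Fin n → Fin m) : Fin (n + 1) → Fin m :=
  Fin.insertNth (insertionIndex x c) (insertionValue x c) c

lemma val_insertionValue (hc : Monotone c) (hx : x < n + m) :
    (insertionValue x c : ℕ) = x - insertionIndex x c := by
  rw [insertionValue, Fin.val_ofNat, Nat.mod_eq_of_lt]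
  have := lt_insertionIndex_add hc hx
  have := insertionIndex_le (x := x) hc
  omega

lemma insertionIndex_add_insertionValue (hc : Monotone c) (hx : x < n + m) :
    (insertionIndex x c : ℕ) + insertionValue x c = x := by
  rw [val_insertionValue hc hx]
  have := insertionIndex_le (x := x) hc
  omega

@[simp]
lemma insertion_insertionIndex : insertion x c (insertionIndex x c) = insertionValue x c :=
  Fin.insertNth_apply_same _ _ _

@[simp]
lemma insertion_succAbove (j : Fin n) :
    insertion x c ((insertionIndex x c).succAbove j) = c j :=
  Fin.insertNth_apply_succAbove _ _ _ _

lemma monotone_insertion (hc : Monotone c) (hx : x < n + m) : Monotone (insertion x c) := by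
  have hidx := (insertionIndex x c).isLt
  refine Fin.monotone_insertNth hc (fun j hj ↦ ?_) (fun j hj ↦ ?_) <;>
    rw [Fin.le_def, val_insertionValue hc hx]
  · rw [Fin.lt_def, Fin.val_castSucc] at hj
    have hprev := (lt_insertionIndex_iff (x := x) hc ⟨insertionIndex x c - 1, by omega⟩).1
      (by simp only; omega)
    have hle := Fin.le_def.1 <| hc (a := j) (b := ⟨insertionIndex x c - 1, by omega⟩)
      (Fin.le_def.2 (by simp only; omega))
    simp only at hprev hle
    omega
  · rw [Fin.le_def, Fin.val_castSucc] at hj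
    have hnext := (lt_insertionIndex_iff (x := x) hc ⟨insertionIndex x c, by omega⟩).not.1
      (lt_irrefl _)
    have hle := Fin.le_def.1 <| hc (a := ⟨insertionIndex x c, by omega⟩) (b := j)
      (Fin.le_def.2 hj)
    simp only at hnext hle
    omega

lemma injOn_insertion :
    Set.InjOn (fun q : ℕ × (Fin n → Fin m) ↦ (insertionIndex q.1 q.2, insertion q.1 q.2))
      {q | q.1 < n + m ∧ Monotone q.2} := by
  rintro ⟨x, c⟩ ⟨hx, hc⟩ ⟨x', c'⟩ ⟨hx', hc'⟩ he
  dsimp only at hx hc hx' hc'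
  obtain ⟨ht, hg⟩ : insertionIndex x c = insertionIndex x' c' ∧ insertion x c = insertion x' c' :=
    Prod.mk.inj he
  have hcc : c = c' := funext fun j ↦ by
    have := congrFun hg ((insertionIndex x c).succAbove j)
    rwa [insertion_succAbove, ht, insertion_succAbove] at this
  have hxx : x = x' := by
    rw [← insertionIndex_add_insertionValue hc hx, ← insertionIndex_add_insertionValue hc' hx',
      ← insertion_insertionIndex, ← insertion_insertionIndex, ht, hg]
  rw [hxx, hcc]

end StarsAndBars

/-- The entry on the anti-diagonal `x` of the hook formed by the first column and the last
row `n` of `v` (indices from `0`). -/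
def hook (n : ℕ) (v : ℕ → ℕ → ℝ) (x : ℕ) : ℝ :=
  if x ≤ n then v x 0 else v n (x - n)

/-- The hypotheses of the theorem for an `n × m` array, with indices from `0`. -/
structure IsAdmissible (n m : ℕ) (v : ℕ → ℕ → ℝ) : Prop where
  nonneg : ∀ i j, i < n → j < m → 0 ≤ v i j
  col : ∀ i j, i + 1 < n → j < m → v (i + 1) j ≤ v i j
  diag : ∀ i j, i + 1 < n → j + 1 < m → v (i + 1) j ≤ v i (j + 1)

open Classical in
noncomputable def monotoneSum (n m : ℕ) (v : ℕ → ℕ → ℝ) : ℝ :=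
  ∑ g ∈ univ.filter (fun g : Fin n → Fin m ↦ Monotone g), ∏ i : Fin n, v i (g i)

noncomputable def hookProduct (m : ℕ) : ℕ → (ℕ → ℕ → ℝ) → ℝ
  | 0, _ => 1
  | n + 1, v => (∑ x ∈ range (n + m), hook n v x) * hookProduct m n fun i j ↦ v (i + 1) j

variable {v : ℕ → ℕ → ℝ}

lemma IsAdmissible.tail (h : IsAdmissible (n + 1) m v) :
    IsAdmissible n m fun i j ↦ v (i + 1) j where
  nonneg i j hi hj := h.nonneg (i + 1) j (by omega) hj
  col i j hi hj := h.col (i + 1) j (by omega) hj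
  diag i j hi hj := h.diag (i + 1) j (by omega) hj

lemma hook_succ (x : ℕ) : hook (n + 1) v (x + 1) = hook n (fun i j ↦ v (i + 1) j) x := by
  unfold hook
  split_ifs <;> first | omega | simp only [Nat.add_sub_add_right]

lemma hook_nonneg (h : IsAdmissible (n + 1) m v) (hm : 0 < m) {x : ℕ} (hx : x < n + m) :
    0 ≤ hook n v x := by
  unfold hook
  split_ifs <;> exact h.nonneg _ _ (by omega) (by omega)

lemma hook_le (h : IsAdmissible (n + 1) m v) {i j : ℕ} (hi : i ≤ n) (hj : j < m) :
    hook n v (i + j) ≤ v i j := by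
  induction j generalizing i with
  | zero => simp [hook, hi]
  | succ j ih =>
    obtain rfl | hi := hi.eq_or_lt
    · simp [hook]
    · calc hook n v (i + (j + 1)) = hook n v (i + 1 + j) := by rw [add_right_comm, add_assoc]
        _ ≤ v (i + 1) j := ih hi (by omega)
        _ ≤ v i (j + 1) := h.diag i j (by omega) hj

lemma sum_Ico_hook {t : ℕ} (ht : t ≤ n + 1) (hm : 0 < m) :
    ∑ x ∈ Ico t (n + m), hook n v x = ∑ i ∈ Ico t (n + 1), v i 0 + ∑ j ∈ Ico 1 m, v n j := by
  rw [← sum_Ico_consecutive _ ht (by omega : n + 1 ≤ n + m)]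
  congr 1
  · exact sum_congr rfl fun i hi ↦ if_pos (by simp at hi; omega)
  · rw [add_comm n 1, add_comm n m, ← sum_Ico_add']
    exact sum_congr rfl fun j hj ↦ by simp [hook, show ¬ j + n ≤ n by simp at hj; omega]

lemma hook_mul_prod_le_prod_insertNth (h : IsAdmissible (n + 1) m v) (p : Fin (n + 1))
    (y : Fin m) (c : Fin n → Fin m) :
    hook n v (p + y) * ∏ j : Fin n, v (j + 1) (c j)
      ≤ ∏ i : Fin (n + 1), v i (Fin.insertNth (α := fun _ ↦ Fin m) p y c i) := by
  rw [Fin.prod_univ_succAbove _ p, Fin.insertNth_apply_same]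
  simp only [Fin.insertNth_apply_succAbove]
  refine mul_le_mul (hook_le h (by omega) y.isLt) (prod_le_prod (fun j _ ↦ ?_) fun j _ ↦ ?_)
    (prod_nonneg fun j _ ↦ ?_) (h.nonneg _ _ p.isLt y.isLt)
  · exact h.nonneg _ _ (by omega) (c j).isLt
  · obtain hj | hj := lt_or_ge j.castSucc p
    · rw [Fin.succAbove_of_castSucc_lt _ _ hj, Fin.val_castSucc]
      exact h.col _ _ (by omega) (c j).isLt
    · rw [Fin.succAbove_of_le_castSucc _ _ hj, Fin.val_succ]
  · exact h.nonneg _ _ (by omega) (c j).isLt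

open Classical in
lemma sum_hook_mul_monotoneSum_le [NeZero m] (h : IsAdmissible (n + 1) m v) :
    (∑ x ∈ range (n + m), hook n v x) * monotoneSum n m (fun i j ↦ v (i + 1) j)
      ≤ (n + 1) * monotoneSum (n + 1) m v := by
  set A := range (n + m) ×ˢ univ.filter fun c : Fin n → Fin m ↦ Monotone c
  set B := (univ : Finset (Fin (n + 1))) ×ˢ univ.filter fun g : Fin (n + 1) → Fin m ↦ Monotone g
  have hA : ∀ q ∈ A, q.1 < n + m ∧ Monotone q.2 := fun q hq ↦ by simpa [A] using hq
  calc (∑ x ∈ range (n + m), hook n v x) * monotoneSum n m (fun i j ↦ v (i + 1) j)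
      = ∑ q ∈ A, hook n v q.1 * ∏ j : Fin n, v (j + 1) (q.2 j) := by
        rw [monotoneSum, sum_mul_sum, sum_product]
    _ ≤ ∑ q ∈ B, ∏ i : Fin (n + 1), v i (q.2 i) := by
        refine sum_le_sum_of_injOn _ (injOn_insertion.mono fun q hq ↦ hA q hq) (fun q hq ↦ ?_)
          (fun q _ ↦ ?_) fun q hq ↦ ?_
        · simpa [B] using monotone_insertion (hA q hq).2 (hA q hq).1
        · exact prod_nonneg fun i _ ↦ h.nonneg _ _ i.isLt (q.2 i).isLt
        · have := hook_mul_prod_le_prod_insertNth h (insertionIndex q.1 q.2)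
            (insertionValue q.1 q.2) q.2
          rwa [insertionIndex_add_insertionValue (hA q hq).2 (hA q hq).1] at this
    _ = (n + 1) * monotoneSum (n + 1) m v := by
        simp only [B, sum_product, sum_const, card_univ, Fintype.card_fin, nsmul_eq_mul, monotoneSum]
        push_cast
        rfl

theorem hookProduct_le [NeZero m] (h : IsAdmissible n m v) :
    hookProduct m n v ≤ n ! * monotoneSum n m v := by
  induction n generalizing v with
  | zero => simp [hookProduct, monotoneSum, Subsingleton.monotone]
  | succ n ih =>
    have hsum : 0 ≤ ∑ x ∈ range (n + m), hook n v x :=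
      sum_nonneg fun x hx ↦ hook_nonneg h (NeZero.pos m) (mem_range.1 hx)
    calc hookProduct m (n + 1) v
        = (∑ x ∈ range (n + m), hook n v x) * hookProduct m n fun i j ↦ v (i + 1) j := rfl
      _ ≤ (∑ x ∈ range (n + m), hook n v x) * (n ! * monotoneSum n m fun i j ↦ v (i + 1) j) :=
        mul_le_mul_of_nonneg_left (ih h.tail) hsum
      _ = n ! * ((∑ x ∈ range (n + m), hook n v x) * monotoneSum n m fun i j ↦ v (i + 1) j) := by
        ring
      _ ≤ n ! * ((n + 1) * monotoneSum (n + 1) m v) :=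
        mul_le_mul_of_nonneg_left (sum_hook_mul_monotoneSum_le h) (by positivity)
      _ = (n + 1)! * monotoneSum (n + 1) m v := by
        push_cast [Nat.factorial_succ]
        ring

theorem hookProduct_succ (n : ℕ) (v : ℕ → ℕ → ℝ) :
    hookProduct m (n + 1) v = ∏ k ∈ range (n + 1), ∑ x ∈ Ico (n - k) (n + m), hook n v x := by
  induction n generalizing v with
  | zero => simp [hookProduct]
  | succ n ih =>
    rw [hookProduct, ih, prod_range_succ _ (n + 1), Nat.sub_self, ← range_eq_Ico, mul_comm]
    congr 1
    refine prod_congr rfl fun k hk ↦ ?_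
    rw [show n + 1 - k = n - k + 1 by simp at hk; omega, add_right_comm, ← sum_Ico_add']
    simp only [hook_succ]

end MaximalMinors

open MaximalMinors

open Classical in
/-- The lower multiplicity bound for ideals of maximal minors: for positive reals
`u i j` (`1 ≤ i ≤ r+1`, `1 ≤ j ≤ m`) decreasing down each column and with
`u i j ≥ u (i+1) (j-1)`, the Herzog–Trung multiplicity sum over weakly increasing
tuples `1 ≤ j₁ ≤ ⋯ ≤ j_{r+1} ≤ m` (encoded by monotone maps `Fin (r+1) → Fin m`)
satisfies
`(r+1)! · Σ ∏ᵢ u i jᵢ ≥ ∏_{k=0}^{r} (Σ_{i=r+1-k}^{r+1} u i 1 + Σ_{j=2}^{m} u (r+1) j)`. -/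
theorem maximal_minors_lower_bound (r m : ℕ) (hm : 1 ≤ m) (u : ℕ → ℕ → ℝ)
    (hpos : ∀ i j, 1 ≤ i → i ≤ r + 1 → 1 ≤ j → j ≤ m → 0 < u i j)
    (hcol : ∀ i j, 1 ≤ i → i ≤ r → 1 ≤ j → j ≤ m → u (i + 1) j ≤ u i j)
    (hdiag : ∀ i j, 1 ≤ i → i ≤ r → 2 ≤ j → j ≤ m → u (i + 1) (j - 1) ≤ u i j) :
    ((r + 1).factorial : ℝ) *
        ∑ f ∈ Finset.univ.filter (fun f : Fin (r + 1) → Fin m => Monotone f),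
          ∏ i : Fin (r + 1), u ((i : ℕ) + 1) ((f i : ℕ) + 1) ≥
      ∏ k ∈ Finset.range (r + 1),
        ((∑ i ∈ Finset.Icc (r + 1 - k) (r + 1), u i 1) +
          ∑ j ∈ Finset.Icc 2 m, u (r + 1) j) := by
  have : NeZero m := ⟨by omega⟩
  have hv : IsAdmissible (r + 1) m fun i j ↦ u (i + 1) (j + 1) :=
    ⟨fun i j _ _ ↦ (hpos _ _ (by omega) (by omega) (by omega) (by omega)).le,
      fun i j _ _ ↦ hcol _ _ (by omega) (by omega) (by omega) (by omega),
      fun i j _ _ ↦ hdiag (i + 1) (j + 2) (by omega) (by omega) (by omega) (by omega)⟩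
  have hfactor : ∀ k ∈ range (r + 1),
      ∑ i ∈ Icc (r + 1 - k) (r + 1), u i 1 + ∑ j ∈ Icc 2 m, u (r + 1) j =
        ∑ x ∈ Ico (r - k) (r + m), hook r (fun i j ↦ u (i + 1) (j + 1)) x := by
    intro k hk
    rw [sum_Ico_hook (by omega) hm, sum_Ico_add' (fun i ↦ u i 1),
      sum_Ico_add' (fun j ↦ u (r + 1) j), Ico_add_one_right_eq_Icc, Ico_add_one_right_eq_Icc,
      show r - k + 1 = r + 1 - k by simp at hk; omega]
  rw [ge_iff_le, prod_congr rfl hfactor, ← hookProduct_succ]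
  exact hookProduct_le hv
end

section
/- Fix integers r ≥ 1 and m ≥ 1 and positive real numbers u_{i,j} for 1 ≤ i ≤ r+1 and 1 ≤ j ≤ m such that u_{1,j} ≥ u_{2,j} ≥ ⋯ ≥ u_{r+1,j} for every j, and u_{i,j} ≥ u_{i+1,j-1} for all 1 ≤ i ≤ r and 2 ≤ j ≤ m. Then equality (r+1)! · Σ_{1 ≤ j_1 ≤ ⋯ ≤ j_{r+1} ≤ m} ∏_{i=1}^{r+1} u_{i,j_i} = ∏_{k=0}^{r} ( Σ_{i=r+1-k}^{r+1} u_{i,1} + Σ_{j=2}^{m} u_{r+1,j} ) holds if and only if all the u_{i,j} are equal to one another. -/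
/-!
Write `T_n(u)` for the sum over monotone `f : Fin n → Fin m` of `∏ᵢ u_{i,f(i)}` (`chainSum`),
`R_n(u)` for the product of hook sums (`hookProduct`), and `u'` for `u` with its first row removed.
Then `R_{k+1}(u) = H · R_k(u')`, where `H` is the sum of `u` over the hook formed by the first
column and the last row, and everything rests on `H · T_k(u') ≤ (k+1) · T_{k+1}(u)`, which by
induction gives `R_n ≤ n! · T_n`.

The column part of `H` is at most `(k+1) u_{1,1}`, and `u_{1,1} T_k(u')` is the part of
`T_{k+1}(u)` with `f(1) = 1`. For the row part, inserting a value `j ≥ 2` into a monotone `g` just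
after its entries below `j`, and raising those entries by one, is a bijection from pairs `(j, g)`
onto pairs (position, monotone `f` with `f(1) ≥ 2`). So it counts the rest of `T_{k+1}(u)` exactly
`k+1` times, and the term `u_{k+1,j} ∏ u'_{t,g(t)}` of `(j, g)` is dominated by the term of its
image: the column inequalities handle the inserted entry, the diagonal ones the raised entries.

If `R_{k+1}(u) = (k+1)! · T_{k+1}(u)`, the top step is an equality, hence so is every comparison
in it: the first column is constant, and the term equalities at constant `g` say that every other
column is constant and, when `k ≥ 1`, that consecutive columns agree.
-/

open Finset

theorem Antitone.val_lt_card_filter_iff {k : ℕ} {P : Fin k → Prop} [DecidablePred P]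
    (hP : Antitone P) (t : Fin k) : (t : ℕ) < #(univ.filter P) ↔ P t := by
  refine ⟨fun ht => by_contra fun hPt => ?_, fun hPt => ?_⟩
  · have : univ.filter P ⊆ Iio t := fun s hs => by
      simp only [mem_filter, mem_univ, true_and, mem_Iio] at hs ⊢
      exact lt_of_not_ge fun hts => hPt (hP hts hs)
    have := card_le_card this
    rw [Fin.card_Iio] at this
    omega
  · have : Iic t ⊆ univ.filter P := fun s hs => by
      simp only [mem_filter, mem_univ, true_and, mem_Iic] at hs ⊢
      exact hP hs hPt
    have := card_le_card this
    rw [Fin.card_Iic] at this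
    omega

theorem Fin.eq_of_forall_castSucc_lt_iff {k : ℕ} {a b : Fin (k + 1)}
    (h : ∀ t : Fin k, t.castSucc < a ↔ t.castSucc < b) : a = b := by
  by_contra hab
  rcases lt_or_gt_of_ne hab with hab | hab
  · have := h ⟨a, by omega⟩
    simp only [Fin.lt_def, Fin.val_castSucc] at this hab
    omega
  · have := h ⟨b, by omega⟩
    simp only [Fin.lt_def, Fin.val_castSucc] at this hab
    omega

theorem Monotone.insertNth {α : Type*} [Preorder α] {n : ℕ} {q : Fin (n + 1)} {x : α}
    {f : Fin n → α} (hf : Monotone f) (hlt : ∀ i, i.castSucc < q → f i ≤ x)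
    (hgt : ∀ i, q ≤ i.castSucc → x ≤ f i) : Monotone (q.insertNth x f) := by
  refine monotone_iff_forall_lt.2 fun a b hab => ?_
  cases a using Fin.succAboveCases q <;> cases b using Fin.succAboveCases q
  · simp at hab
  · rename_i j
    simpa using hgt _ (by simpa [Fin.lt_succAbove_iff_le_castSucc] using hab)
  · rename_i j
    simpa using hlt _ (by simpa [Fin.succAbove_lt_iff_castSucc_lt] using hab)
  · simpa using hf ((Fin.strictMono_succAbove _).lt_iff_lt.mp hab).le

theorem Fin.monotone_cons {α : Type*} [Preorder α] {n : ℕ} {a : α} {f : Fin n → α}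
    (ha : ∀ i, a ≤ f i) (hf : Monotone f) : Monotone (Fin.cons a f : Fin (n + 1) → α) :=
  monotone_iff_forall_lt.2 ((Fin.liftFun_cons (· ≤ ·)).2 ⟨ha, monotone_iff_forall_lt.1 hf⟩)

theorem Monotone.apply_ne_zero {k m : ℕ} [NeZero m] {f : Fin (k + 1) → Fin m} (hf : Monotone f)
    (hf0 : f 0 ≠ 0) (i : Fin (k + 1)) : f i ≠ 0 :=
  Fin.pos_iff_ne_zero.1 (lt_of_lt_of_le (Fin.pos_iff_ne_zero.2 hf0) (hf (Fin.zero_le i)))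

theorem sum_Icc_two_eq_sum_filter_ne_zero {M : Type*} [AddCommMonoid M] {m : ℕ} [NeZero m]
    (w : ℕ → M) : ∑ j ∈ Icc 2 m, w j = ∑ J ∈ univ.filter (· ≠ (0 : Fin m)), w (J + 1) := by
  refine (sum_nbij' (fun J : Fin m => (J : ℕ) + 1) (fun j => Fin.ofNat m (j - 1))
    ?_ ?_ ?_ ?_ fun _ _ => rfl).symm
  · intro J hJ
    simp only [mem_filter, mem_univ, true_and, mem_Icc, ne_eq, Fin.ext_iff,
      Fin.val_zero] at hJ ⊢
    omega
  · intro j hj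
    simp only [mem_filter, mem_univ, true_and, mem_Icc, ne_eq, Fin.ext_iff,
      Fin.val_zero, Fin.val_ofNat] at hj ⊢
    rw [Nat.mod_eq_of_lt (by omega)]
    omega
  · intro J _
    simp
  · intro j hj
    simp only [mem_Icc] at hj
    simp only [Fin.val_ofNat]
    rw [Nat.mod_eq_of_lt (by omega)]
    omega

open Classical in
noncomputable def monotoneTuples (n m : ℕ) : Finset (Fin n → Fin m) :=
  univ.filter Monotone

theorem mem_monotoneTuples {n m : ℕ} {f : Fin n → Fin m} : f ∈ monotoneTuples n m ↔ Monotone f := by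
  simp [monotoneTuples]

noncomputable def chainSum (n m : ℕ) (u : ℕ → ℕ → ℝ) : ℝ :=
  ∑ f ∈ monotoneTuples n m, ∏ i : Fin n, u ((i : ℕ) + 1) ((f i : ℕ) + 1)

noncomputable def hookSum (k m : ℕ) (u : ℕ → ℕ → ℝ) : ℝ :=
  (∑ i ∈ Icc 1 (k + 1), u i 1) + ∑ j ∈ Icc 2 m, u (k + 1) j

noncomputable def hookProduct (n m : ℕ) (u : ℕ → ℕ → ℝ) : ℝ :=
  ∏ k ∈ range n, ((∑ i ∈ Icc (n - k) n, u i 1) + ∑ j ∈ Icc 2 m, u n j)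

structure AdmissibleWeights (n m : ℕ) (u : ℕ → ℕ → ℝ) : Prop where
  pos : ∀ i j, 1 ≤ i → i ≤ n → 1 ≤ j → j ≤ m → 0 < u i j
  col : ∀ i j, 1 ≤ i → i < n → 1 ≤ j → j ≤ m → u (i + 1) j ≤ u i j
  diag : ∀ i j, 1 ≤ i → i < n → 1 ≤ j → j < m → u (i + 1) j ≤ u i (j + 1)

namespace AdmissibleWeights

variable {n m : ℕ} {u : ℕ → ℕ → ℝ}

theorem col_antitone (hu : AdmissibleWeights n m u) {i i' j : ℕ} (hi : 1 ≤ i) (hii' : i ≤ i')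
    (hi' : i' ≤ n) (hj : 1 ≤ j) (hjm : j ≤ m) : u i' j ≤ u i j := by
  induction i', hii' using Nat.le_induction with
  | base => exact le_rfl
  | succ i' hii' ih => exact (hu.col i' j (by omega) (by omega) hj hjm).trans (ih (by omega))

theorem dropRow (hu : AdmissibleWeights (n + 1) m u) :
    AdmissibleWeights n m (fun i => u (i + 1)) where
  pos i j hi hin := hu.pos (i + 1) j (by omega) (by omega)
  col i j hi hin := hu.col (i + 1) j (by omega) (by omega)
  diag i j hi hin := hu.diag (i + 1) j (by omega) (by omega)

theorem sum_col_le {k : ℕ} [NeZero m] (hu : AdmissibleWeights (k + 1) m u) :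
    ∑ i ∈ Icc 1 (k + 1), u i 1 ≤ (k + 1) * u 1 1 := by
  calc ∑ i ∈ Icc 1 (k + 1), u i 1 ≤ ∑ _i ∈ Icc 1 (k + 1), u 1 1 :=
        sum_le_sum fun i hi => by
          rw [mem_Icc] at hi
          exact hu.col_antitone le_rfl hi.1 hi.2 le_rfl NeZero.one_le
    _ = (k + 1) * u 1 1 := by simp

end AdmissibleWeights

theorem chainSum_zero (m : ℕ) (u : ℕ → ℕ → ℝ) : chainSum 0 m u = 1 := by
  simp [chainSum, monotoneTuples, Subsingleton.monotone]

theorem chainSum_pos {n m : ℕ} [NeZero m] {u : ℕ → ℕ → ℝ}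
    (hpos : ∀ i j, 1 ≤ i → i ≤ n → 1 ≤ j → j ≤ m → 0 < u i j) : 0 < chainSum n m u := by
  exact sum_pos (fun f _ => prod_pos fun i _ => hpos _ _ (by omega) (by omega) (by omega)
    (by omega)) ⟨fun _ => 0, by simp [monotoneTuples, monotone_const]⟩

theorem chainSum_succ {m : ℕ} [NeZero m] (k : ℕ) (u : ℕ → ℕ → ℝ) :
    chainSum (k + 1) m u = u 1 1 * chainSum k m (fun i => u (i + 1)) +
      ∑ f ∈ (monotoneTuples (k + 1) m).filter (· 0 ≠ 0),
        ∏ i : Fin (k + 1), u ((i : ℕ) + 1) ((f i : ℕ) + 1) := by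
  rw [chainSum, ← sum_filter_add_sum_filter_not _ (fun f : Fin (k + 1) → Fin m => f 0 = 0),
    chainSum, mul_sum]
  congr 1
  refine sum_nbij' Fin.tail (fun g : Fin k → Fin m => (Fin.cons 0 g : Fin (k + 1) → Fin m))
    ?_ ?_ ?_ ?_ ?_
  · intro f hf
    simp only [mem_filter, mem_monotoneTuples] at hf ⊢
    exact hf.1.comp (Fin.strictMono_succ).monotone
  · intro g hg
    simp only [mem_filter, mem_monotoneTuples, Fin.cons_zero, and_true] at hg ⊢
    exact Fin.monotone_cons (fun _ => Fin.zero_le _) hg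
  · intro f hf
    simp only [mem_filter] at hf
    rw [← hf.2, Fin.cons_self_tail]
  · intro g _
    exact Fin.tail_cons _ _
  · intro f hf
    simp only [mem_filter] at hf
    simp [Fin.prod_univ_succ, hf.2, Fin.tail]

theorem hookProduct_succ (k m : ℕ) (u : ℕ → ℕ → ℝ) :
    hookProduct (k + 1) m u = hookSum k m u * hookProduct k m (fun i => u (i + 1)) := by
  rw [hookProduct, prod_range_succ, mul_comm, Nat.add_sub_cancel_left, hookSum, hookProduct]
  congr 1
  refine prod_congr rfl fun l hl => ?_
  have hlk := mem_range.1 hl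
  rw [show k + 1 - l = k - l + 1 by omega, ← map_add_right_Icc, sum_map]
  rfl

section Insertion

variable {k m : ℕ}

def raiseBelow (J x : Fin m) : Fin m :=
  if h : x < J then ⟨x + 1, lt_of_le_of_lt h J.isLt⟩ else x

theorem monotone_raiseBelow (J : Fin m) : Monotone (raiseBelow J) := by
  intro x y hxy
  simp only [raiseBelow]
  split_ifs with hx hy hy <;> simp only [Fin.le_def, Fin.lt_def] at * <;> omega

def insertPos (J : Fin m) (g : Fin k → Fin m) : Fin (k + 1) :=
  ⟨#(univ.filter fun t => g t < J), Nat.lt_succ_of_le ((card_filter_le _ _).trans_eq (card_fin k))⟩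

def insertChain (J : Fin m) (g : Fin k → Fin m) : Fin (k + 1) → Fin m :=
  (insertPos J g).insertNth J fun t => raiseBelow J (g t)

def removeChain (p : Fin (k + 1)) (f : Fin (k + 1) → Fin m) : Fin k → Fin m := fun t =>
  if t.castSucc < p then ⟨f (p.succAbove t) - 1, by have := (f (p.succAbove t)).isLt; omega⟩
  else f (p.succAbove t)

theorem castSucc_lt_insertPos_iff {J : Fin m} {g : Fin k → Fin m} (hg : Monotone g) (t : Fin k) :
    t.castSucc < insertPos J g ↔ g t < J := by
  rw [Fin.lt_def, Fin.val_castSucc, insertPos]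
  exact Antitone.val_lt_card_filter_iff (fun a b hab hb => lt_of_le_of_lt (hg hab) hb) t

theorem insertChain_apply_insertPos (J : Fin m) (g : Fin k → Fin m) :
    insertChain J g (insertPos J g) = J :=
  Fin.insertNth_apply_same _ _ _

theorem insertChain_apply_succAbove (J : Fin m) (g : Fin k → Fin m) (t : Fin k) :
    insertChain J g ((insertPos J g).succAbove t) = raiseBelow J (g t) :=
  Fin.insertNth_apply_succAbove _ _ _ _

theorem monotone_insertChain {J : Fin m} {g : Fin k → Fin m} (hg : Monotone g) :
    Monotone (insertChain J g) := by
  refine ((monotone_raiseBelow J).comp hg).insertNth (fun t ht => ?_) (fun t ht => ?_)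
  · have h := (castSucc_lt_insertPos_iff hg t).1 ht
    simp only [Function.comp_apply, raiseBelow, dif_pos h, Fin.le_def]
    exact h
  · have h := not_lt.2 ht
    rw [castSucc_lt_insertPos_iff hg] at h
    simpa [raiseBelow, h] using not_lt.1 h

theorem insertChain_ne_zero [NeZero m] {J : Fin m} (hJ : J ≠ 0) (g : Fin k → Fin m)
    (i : Fin (k + 1)) : insertChain J g i ≠ 0 := by
  revert i
  rw [Fin.forall_iff_succAbove (insertPos J g), insertChain_apply_insertPos]
  refine ⟨hJ, fun t => ?_⟩
  rw [insertChain_apply_succAbove, raiseBelow]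
  rw [← Fin.pos_iff_ne_zero] at hJ ⊢
  split_ifs with h
  · rw [Fin.lt_def, Fin.val_zero]
    exact Nat.succ_pos _
  · exact lt_of_lt_of_le hJ (not_lt.1 h)

theorem monotone_removeChain {p : Fin (k + 1)} {f : Fin (k + 1) → Fin m} (hf : Monotone f) :
    Monotone (removeChain p f) := by
  intro a b hab
  have hf' := hf ((Fin.strictMono_succAbove p).monotone hab)
  have hcast : b.castSucc < p → a.castSucc < p :=
    lt_of_le_of_lt (Fin.castSucc_le_castSucc_iff.2 hab)
  simp only [removeChain]
  split_ifs with ha hb hb <;> simp only [Fin.le_def] at * <;> omega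

theorem removeChain_insertChain {J : Fin m} {g : Fin k → Fin m} (hg : Monotone g) :
    removeChain (insertPos J g) (insertChain J g) = g := by
  funext t
  simp only [removeChain, insertChain_apply_succAbove, castSucc_lt_insertPos_iff hg, raiseBelow]
  split_ifs <;> simp

theorem removeChain_lt_iff [NeZero m] {p : Fin (k + 1)} {f : Fin (k + 1) → Fin m} (hf : Monotone f)
    (hf0 : f 0 ≠ 0) (t : Fin k) : removeChain p f t < f p ↔ t.castSucc < p := by
  have hpos : 0 < (f (p.succAbove t) : ℕ) := Fin.pos_iff_ne_zero.2 (hf.apply_ne_zero hf0 _)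
  simp only [removeChain]
  split_ifs with h
  · have := hf (Fin.succAbove_lt_iff_castSucc_lt p t |>.2 h).le
    simp only [Fin.lt_def, Fin.le_def] at *
    omega
  · have := hf (Fin.lt_succAbove_iff_le_castSucc p t |>.2 (not_lt.1 h)).le
    rw [iff_false_right h, not_lt]
    exact this

theorem insertPos_removeChain [NeZero m] {p : Fin (k + 1)} {f : Fin (k + 1) → Fin m}
    (hf : Monotone f) (hf0 : f 0 ≠ 0) : insertPos (f p) (removeChain p f) = p :=
  Fin.eq_of_forall_castSucc_lt_iff fun t => by
    rw [castSucc_lt_insertPos_iff (monotone_removeChain hf), removeChain_lt_iff hf hf0]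

theorem insertChain_removeChain [NeZero m] {p : Fin (k + 1)} {f : Fin (k + 1) → Fin m}
    (hf : Monotone f) (hf0 : f 0 ≠ 0) : insertChain (f p) (removeChain p f) = f := by
  rw [insertChain, insertPos_removeChain hf hf0]
  conv_rhs => rw [← Fin.insertNth_self_removeNth p f]
  congr 1
  funext t
  have hpos : 0 < (f (p.succAbove t) : ℕ) := Fin.pos_iff_ne_zero.2 (hf.apply_ne_zero hf0 _)
  rw [raiseBelow]
  split_ifs with h
  · rw [removeChain_lt_iff hf hf0] at h
    ext
    simp only [removeChain, if_pos h, Fin.removeNth]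
    omega
  · rw [removeChain_lt_iff hf hf0] at h
    simp only [removeChain, if_neg h, Fin.removeNth]

theorem sum_insertChain [NeZero m] {M : Type*} [AddCommMonoid M]
    (F : (Fin (k + 1) → Fin m) → M) :
    ∑ x ∈ univ.filter (· ≠ 0) ×ˢ monotoneTuples k m, F (insertChain x.1 x.2) =
      (k + 1) • ∑ f ∈ (monotoneTuples (k + 1) m).filter (· 0 ≠ 0), F f := by
  have hcount :
      ∑ y ∈ (univ : Finset (Fin (k + 1))) ×ˢ (monotoneTuples (k + 1) m).filter (· 0 ≠ 0), F y.2 =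
        (k + 1) • ∑ f ∈ (monotoneTuples (k + 1) m).filter (· 0 ≠ 0), F f := by
    simp only [sum_product, sum_const, card_univ, Fintype.card_fin]
  rw [← hcount]
  refine sum_nbij' (fun x => (insertPos x.1 x.2, insertChain x.1 x.2))
    (fun y => (y.2 y.1, removeChain y.1 y.2)) ?_ ?_ ?_ ?_ fun _ _ => rfl
  · rintro ⟨J, g⟩ hx
    simp only [mem_product, mem_filter, mem_univ, true_and, mem_monotoneTuples] at hx ⊢
    exact ⟨monotone_insertChain hx.2, insertChain_ne_zero hx.1 g 0⟩
  · rintro ⟨p, f⟩ hy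
    simp only [mem_product, mem_filter, mem_univ, true_and, mem_monotoneTuples] at hy ⊢
    exact ⟨hy.1.apply_ne_zero hy.2 p, monotone_removeChain hy.1⟩
  · rintro ⟨J, g⟩ hx
    simp only [mem_product, mem_filter, mem_univ, true_and, mem_monotoneTuples] at hx
    simp [insertChain_apply_insertPos, removeChain_insertChain hx.2]
  · rintro ⟨p, f⟩ hy
    simp only [mem_product, mem_filter, mem_univ, true_and, mem_monotoneTuples] at hy
    simp [insertPos_removeChain hy.1 hy.2, insertChain_removeChain hy.1 hy.2]

theorem AdmissibleWeights.mul_prod_le_prod_insertChain {u : ℕ → ℕ → ℝ}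
    (hu : AdmissibleWeights (k + 1) m u) {J : Fin m} {g : Fin k → Fin m} (hg : Monotone g) :
    u (k + 1) ((J : ℕ) + 1) * ∏ t : Fin k, u ((t : ℕ) + 1 + 1) ((g t : ℕ) + 1) ≤
      ∏ i : Fin (k + 1), u ((i : ℕ) + 1) ((insertChain J g i : ℕ) + 1) := by
  rw [Fin.prod_univ_succAbove _ (insertPos J g), insertChain_apply_insertPos]
  refine mul_le_mul (hu.col_antitone (by omega) (by omega) le_rfl (by omega) (by omega))
    (prod_le_prod (fun t _ => (hu.pos _ _ (by omega) (by omega) (by omega) (by omega)).le)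
      fun t _ => ?_)
    (prod_nonneg fun t _ => (hu.pos _ _ (by omega) (by omega) (by omega) (by omega)).le)
    (hu.pos _ _ (by omega) (by omega) (by omega) (by omega)).le
  rw [insertChain_apply_succAbove, raiseBelow]
  split_ifs with h
  · rw [Fin.succAbove_of_castSucc_lt _ _ ((castSucc_lt_insertPos_iff hg t).2 h)]
    exact hu.diag _ _ (by omega) (by omega) (by omega) (by simp only [Fin.lt_def] at h; omega)
  · rw [Fin.succAbove_of_le_castSucc _ _ (not_lt.1 (mt (castSucc_lt_insertPos_iff hg t).1 h))]
    simp

end Insertion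

theorem hookSum_mul_chainSum {m : ℕ} [NeZero m] (k : ℕ) (u : ℕ → ℕ → ℝ) :
    hookSum k m u * chainSum k m (fun i => u (i + 1)) =
      (∑ i ∈ Icc 1 (k + 1), u i 1) * chainSum k m (fun i => u (i + 1)) +
        ∑ x ∈ univ.filter (· ≠ (0 : Fin m)) ×ˢ monotoneTuples k m,
          u (k + 1) ((x.1 : ℕ) + 1) * ∏ t : Fin k, u ((t : ℕ) + 1 + 1) ((x.2 t : ℕ) + 1) := by
  rw [hookSum, add_mul, sum_Icc_two_eq_sum_filter_ne_zero, sum_product]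
  congr 1
  rw [sum_mul]
  simp only [chainSum, mul_sum]

theorem succ_mul_chainSum_succ {m : ℕ} [NeZero m] (k : ℕ) (u : ℕ → ℕ → ℝ) :
    (k + 1) * chainSum (k + 1) m u =
      (k + 1) * u 1 1 * chainSum k m (fun i => u (i + 1)) +
        ∑ x ∈ univ.filter (· ≠ (0 : Fin m)) ×ˢ monotoneTuples k m,
          ∏ i : Fin (k + 1), u ((i : ℕ) + 1) ((insertChain x.1 x.2 i : ℕ) + 1) := by
  rw [chainSum_succ, sum_insertChain (fun f => ∏ i : Fin (k + 1), u (i + 1) (f i + 1)),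
    nsmul_eq_mul]
  push_cast
  ring

section Step

variable {k m : ℕ} [NeZero m] {u : ℕ → ℕ → ℝ}

theorem AdmissibleWeights.hookSum_mul_chainSum_le (hu : AdmissibleWeights (k + 1) m u) :
    hookSum k m u * chainSum k m (fun i => u (i + 1)) ≤ (k + 1) * chainSum (k + 1) m u := by
  rw [hookSum_mul_chainSum, succ_mul_chainSum_succ]
  exact add_le_add (mul_le_mul_of_nonneg_right hu.sum_col_le (chainSum_pos hu.dropRow.pos).le)
    (sum_le_sum fun x hx =>
      hu.mul_prod_le_prod_insertChain (mem_monotoneTuples.1 (mem_product.1 hx).2))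

theorem AdmissibleWeights.hookSum_mul_chainSum_eq_iff (hu : AdmissibleWeights (k + 1) m u) :
    hookSum k m u * chainSum k m (fun i => u (i + 1)) = (k + 1) * chainSum (k + 1) m u ↔
      ∑ i ∈ Icc 1 (k + 1), u i 1 = (k + 1) * u 1 1 ∧
        ∀ x ∈ univ.filter (· ≠ (0 : Fin m)) ×ˢ monotoneTuples k m,
          u (k + 1) ((x.1 : ℕ) + 1) * ∏ t : Fin k, u ((t : ℕ) + 1 + 1) ((x.2 t : ℕ) + 1) =
            ∏ i : Fin (k + 1), u ((i : ℕ) + 1) ((insertChain x.1 x.2 i : ℕ) + 1) := by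
  rw [hookSum_mul_chainSum, succ_mul_chainSum_succ,
    add_eq_add_iff_eq_and_eq
      (mul_le_mul_of_nonneg_right hu.sum_col_le (chainSum_pos hu.dropRow.pos).le)
      (sum_le_sum fun x hx =>
        hu.mul_prod_le_prod_insertChain (mem_monotoneTuples.1 (mem_product.1 hx).2)),
    sum_eq_sum_iff_of_le fun x hx =>
      hu.mul_prod_le_prod_insertChain (mem_monotoneTuples.1 (mem_product.1 hx).2),
    mul_left_inj' (chainSum_pos hu.dropRow.pos).ne']

theorem hookSum_mul_chainSum_of_const {c : ℝ}
    (hc : ∀ i j, 1 ≤ i → i ≤ k + 1 → 1 ≤ j → j ≤ m → u i j = c) :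
    hookSum k m u * chainSum k m (fun i => u (i + 1)) = (k + 1) * chainSum (k + 1) m u := by
  rw [hookSum_mul_chainSum, succ_mul_chainSum_succ]
  congr 1
  · rw [sum_congr rfl fun i hi => hc i 1 (mem_Icc.1 hi).1 (mem_Icc.1 hi).2 le_rfl NeZero.one_le,
      hc 1 1 le_rfl (by omega) le_rfl NeZero.one_le]
    simp
  · refine sum_congr rfl fun x _ => ?_
    rw [prod_eq_pow_card fun t _ => hc _ _ (by omega) (by omega) (by omega) (by omega),
      prod_eq_pow_card fun i _ => hc _ _ (by omega) (by omega) (by omega) (by omega),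
      hc _ _ (by omega) le_rfl (by omega) (by omega)]
    simp [pow_succ']

end Step

section Induction

open scoped Nat

variable {m : ℕ} [NeZero m]

theorem hookSum_nonneg {k : ℕ} {u : ℕ → ℕ → ℝ}
    (hpos : ∀ i j, 1 ≤ i → i ≤ k + 1 → 1 ≤ j → j ≤ m → 0 < u i j) : 0 ≤ hookSum k m u :=
  add_nonneg
    (sum_nonneg fun i hi => (hpos i 1 (mem_Icc.1 hi).1 (mem_Icc.1 hi).2 le_rfl NeZero.one_le).le)
    (sum_nonneg fun j hj => (hpos _ j (by omega) le_rfl (by linarith [(mem_Icc.1 hj).1])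
      (mem_Icc.1 hj).2).le)

theorem AdmissibleWeights.hookProduct_le {n : ℕ} {u : ℕ → ℕ → ℝ}
    (hu : AdmissibleWeights n m u) : hookProduct n m u ≤ n ! * chainSum n m u := by
  induction n generalizing u with
  | zero => simp [hookProduct, chainSum_zero]
  | succ k ih =>
    calc hookProduct (k + 1) m u
        = hookSum k m u * hookProduct k m (fun i => u (i + 1)) := hookProduct_succ k m u
      _ ≤ hookSum k m u * (k ! * chainSum k m (fun i => u (i + 1))) :=
        mul_le_mul_of_nonneg_left (ih hu.dropRow) (hookSum_nonneg hu.pos)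
      _ = k ! * (hookSum k m u * chainSum k m (fun i => u (i + 1))) := by ring
      _ ≤ k ! * ((k + 1) * chainSum (k + 1) m u) :=
        mul_le_mul_of_nonneg_left hu.hookSum_mul_chainSum_le (by positivity)
      _ = (k + 1)! * chainSum (k + 1) m u := by push_cast [Nat.factorial_succ]; ring

theorem hookProduct_eq_of_const {n : ℕ} {u : ℕ → ℕ → ℝ} {c : ℝ}
    (hc : ∀ i j, 1 ≤ i → i ≤ n → 1 ≤ j → j ≤ m → u i j = c) :
    hookProduct n m u = n ! * chainSum n m u := by
  induction n generalizing u with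
  | zero => simp [hookProduct, chainSum_zero]
  | succ k ih =>
    rw [hookProduct_succ, ih fun i j hi hik => hc (i + 1) j (by omega) (by omega), mul_left_comm,
      hookSum_mul_chainSum_of_const hc]
    push_cast [Nat.factorial_succ]
    ring

theorem AdmissibleWeights.hookSum_mul_chainSum_eq {k : ℕ} {u : ℕ → ℕ → ℝ}
    (hu : AdmissibleWeights (k + 1) m u)
    (h : hookProduct (k + 1) m u = (k + 1)! * chainSum (k + 1) m u) :
    hookSum k m u * chainSum k m (fun i => u (i + 1)) = (k + 1) * chainSum (k + 1) m u := by
  refine hu.hookSum_mul_chainSum_le.antisymm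
    (le_of_mul_le_mul_left ?_ (by positivity : (0 : ℝ) < k !))
  calc k ! * ((k + 1) * chainSum (k + 1) m u)
      = hookSum k m u * hookProduct k m (fun i => u (i + 1)) := by
        rw [← hookProduct_succ, h]
        push_cast [Nat.factorial_succ]
        ring
    _ ≤ hookSum k m u * (k ! * chainSum k m (fun i => u (i + 1))) :=
        mul_le_mul_of_nonneg_left hu.dropRow.hookProduct_le (hookSum_nonneg hu.pos)
    _ = k ! * (hookSum k m u * chainSum k m (fun i => u (i + 1))) := by ring

end Induction

section Extraction

variable {k m : ℕ}

theorem insertPos_const_of_le {J a : Fin m} (h : J ≤ a) :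
    insertPos J (fun _ : Fin k => a) = 0 := by
  ext
  simp [insertPos, not_lt.2 h]

theorem insertPos_const_of_lt {J a : Fin m} (h : a < J) :
    insertPos J (fun _ : Fin k => a) = Fin.last k := by
  ext
  simp [insertPos, h]

theorem prod_insertChain_const_of_le (u : ℕ → ℕ → ℝ) {J a : Fin m} (h : J ≤ a) :
    ∏ i : Fin (k + 1), u ((i : ℕ) + 1) ((insertChain J (fun _ => a) i : ℕ) + 1) =
      u 1 ((J : ℕ) + 1) * ∏ t : Fin k, u ((t : ℕ) + 1 + 1) ((a : ℕ) + 1) := by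
  rw [Fin.prod_univ_succAbove _ (insertPos J _), insertChain_apply_insertPos]
  simp only [insertChain_apply_succAbove]
  rw [insertPos_const_of_le h]
  simp [raiseBelow, not_lt.2 h]

theorem prod_insertChain_const_of_lt (u : ℕ → ℕ → ℝ) {J a : Fin m} (h : a < J) :
    ∏ i : Fin (k + 1), u ((i : ℕ) + 1) ((insertChain J (fun _ => a) i : ℕ) + 1) =
      u (k + 1) ((J : ℕ) + 1) * ∏ t : Fin k, u ((t : ℕ) + 1) ((a : ℕ) + 1 + 1) := by
  rw [Fin.prod_univ_succAbove _ (insertPos J _), insertChain_apply_insertPos]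
  simp only [insertChain_apply_succAbove]
  rw [insertPos_const_of_lt h]
  simp [raiseBelow, h]

variable [NeZero m] {u : ℕ → ℕ → ℝ}

theorem AdmissibleWeights.mul_prod_eq_prod_insertChain_const (hu : AdmissibleWeights (k + 1) m u)
    (h : hookSum k m u * chainSum k m (fun i => u (i + 1)) = (k + 1) * chainSum (k + 1) m u)
    {J : Fin m} (hJ : J ≠ 0) (a : Fin m) :
    u (k + 1) ((J : ℕ) + 1) * ∏ t : Fin k, u ((t : ℕ) + 1 + 1) ((a : ℕ) + 1) =
      ∏ i : Fin (k + 1), u ((i : ℕ) + 1) ((insertChain J (fun _ => a) i : ℕ) + 1) :=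
  (hu.hookSum_mul_chainSum_eq_iff.1 h).2 (J, fun _ => a)
    (by simp [hJ, mem_monotoneTuples, monotone_const])

theorem AdmissibleWeights.col_eq_of_hookSum_mul_chainSum_eq (hu : AdmissibleWeights (k + 1) m u)
    (h : hookSum k m u * chainSum k m (fun i => u (i + 1)) = (k + 1) * chainSum (k + 1) m u)
    {i j : ℕ} (hi : 1 ≤ i) (hik : i ≤ k + 1) (hj : 1 ≤ j) (hjm : j ≤ m) : u i j = u 1 j := by
  rcases (show j = 1 ∨ 2 ≤ j by omega) with rfl | hj2
  · have hsum : ∑ i ∈ Icc 1 (k + 1), u i 1 = ∑ _i ∈ Icc 1 (k + 1), u 1 1 := by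
      rw [(hu.hookSum_mul_chainSum_eq_iff.1 h).1]
      simp
    refine (sum_eq_sum_iff_of_le fun i hi => ?_).1 hsum i (mem_Icc.2 ⟨hi, hik⟩)
    exact hu.col_antitone le_rfl (mem_Icc.1 hi).1 (mem_Icc.1 hi).2 le_rfl NeZero.one_le
  · have hJ := hu.mul_prod_eq_prod_insertChain_const h (J := ⟨j - 1, by omega⟩)
      (by simp [Fin.ext_iff]; omega) ⟨j - 1, by omega⟩
    rw [prod_insertChain_const_of_le _ le_rfl] at hJ
    simp only [show j - 1 + 1 = j by omega] at hJ
    have hbottom := mul_right_cancel₀ (prod_pos fun t _ =>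
      hu.pos _ _ (by omega) (by omega) (by omega) (by omega)).ne' hJ
    refine le_antisymm (hu.col_antitone le_rfl hi hik hj hjm) ?_
    rw [← hbottom]
    exact hu.col_antitone hi hik le_rfl hj hjm

theorem AdmissibleWeights.row_eq_of_hookSum_mul_chainSum_eq (hk : 1 ≤ k)
    (hu : AdmissibleWeights (k + 1) m u)
    (h : hookSum k m u * chainSum k m (fun i => u (i + 1)) = (k + 1) * chainSum (k + 1) m u)
    {j : ℕ} (hj : 1 ≤ j) (hjm : j < m) : u 1 (j + 1) = u 1 j := by
  have hJ := hu.mul_prod_eq_prod_insertChain_const h (J := ⟨j, hjm⟩)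
    (by simp [Fin.ext_iff]; omega) ⟨j - 1, by omega⟩
  rw [prod_insertChain_const_of_lt _ (by simp [Fin.lt_def]; omega)] at hJ
  have hpow := mul_left_cancel₀ (hu.pos _ _ (by omega) le_rfl (by omega) (by omega)).ne' hJ
  simp only [show j - 1 + 1 = j by omega] at hpow
  rw [prod_eq_pow_card fun t _ => hu.col_eq_of_hookSum_mul_chainSum_eq h (by omega) (by omega)
      (by omega) (by omega),
    prod_eq_pow_card fun t _ => hu.col_eq_of_hookSum_mul_chainSum_eq h (by omega) (by omega)
      (by omega) (by omega), card_univ, Fintype.card_fin] at hpow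
  exact ((pow_left_inj₀ (hu.pos _ _ le_rfl (by omega) (by omega) (by omega)).le
    (hu.pos _ _ le_rfl (by omega) (by omega) (by omega)).le (by omega)).1 hpow).symm

theorem AdmissibleWeights.eq_of_hookSum_mul_chainSum_eq (hk : 1 ≤ k)
    (hu : AdmissibleWeights (k + 1) m u)
    (h : hookSum k m u * chainSum k m (fun i => u (i + 1)) = (k + 1) * chainSum (k + 1) m u)
    {i j : ℕ} (hi : 1 ≤ i) (hik : i ≤ k + 1) (hj : 1 ≤ j) (hjm : j ≤ m) : u i j = u 1 1 := by
  rw [hu.col_eq_of_hookSum_mul_chainSum_eq h hi hik hj hjm]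
  induction j, hj using Nat.le_induction with
  | base => rfl
  | succ j hj ih =>
    rw [hu.row_eq_of_hookSum_mul_chainSum_eq hk h hj hjm, ih (by omega)]

end Extraction

open Classical in
/-- Equality analysis for the lower bound in the maximal-minors theorem:
for `r ≥ 1`, `m ≥ 1` and positive reals `u i j` (`1 ≤ i ≤ r+1`, `1 ≤ j ≤ m`)
decreasing down each column and with `u i j ≥ u (i+1) (j-1)`, equality
`(r+1)! · Σ_{1 ≤ j₁ ≤ ⋯ ≤ j_{r+1} ≤ m} ∏ᵢ u i jᵢ
  = ∏_{k=0}^{r} (Σ_{i=r+1-k}^{r+1} u i 1 + Σ_{j=2}^{m} u (r+1) j)`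
holds if and only if all the `u i j` are equal to one another. -/
theorem maximal_minors_lower_bound_equality (r m : ℕ) (hr : 1 ≤ r) (hm : 1 ≤ m)
    (u : ℕ → ℕ → ℝ)
    (hpos : ∀ i j, 1 ≤ i → i ≤ r + 1 → 1 ≤ j → j ≤ m → 0 < u i j)
    (hcol : ∀ i j, 1 ≤ i → i ≤ r → 1 ≤ j → j ≤ m → u (i + 1) j ≤ u i j)
    (hdiag : ∀ i j, 1 ≤ i → i ≤ r → 2 ≤ j → j ≤ m → u (i + 1) (j - 1) ≤ u i j) :
    ((r + 1).factorial : ℝ) *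
        ∑ f ∈ Finset.univ.filter (fun f : Fin (r + 1) → Fin m => Monotone f),
          ∏ i : Fin (r + 1), u ((i : ℕ) + 1) ((f i : ℕ) + 1) =
      ∏ k ∈ Finset.range (r + 1),
        ((∑ i ∈ Finset.Icc (r + 1 - k) (r + 1), u i 1) +
          ∑ j ∈ Finset.Icc 2 m, u (r + 1) j) ↔
    ∀ i j i' j', 1 ≤ i → i ≤ r + 1 → 1 ≤ j → j ≤ m →
      1 ≤ i' → i' ≤ r + 1 → 1 ≤ j' → j' ≤ m → u i j = u i' j' := by
  have : NeZero m := ⟨by omega⟩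
  have hu : AdmissibleWeights (r + 1) m u :=
    ⟨hpos, fun i j hi hir => hcol i j hi (by omega),
      fun i j hi hir hj hjm => hdiag i (j + 1) hi (by omega) (by omega) hjm⟩
  change _ * chainSum (r + 1) m u = hookProduct (r + 1) m u ↔ _
  constructor
  · intro h i j i' j' hi hir hj hjm hi' hi'r hj' hj'm
    have hstep := hu.hookSum_mul_chainSum_eq h.symm
    rw [hu.eq_of_hookSum_mul_chainSum_eq hr hstep hi hir hj hjm,
      hu.eq_of_hookSum_mul_chainSum_eq hr hstep hi' hi'r hj' hj'm]
  · intro h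
    exact (hookProduct_eq_of_const fun i j hi hir hj hjm =>
      h i j 1 1 hi hir hj hjm le_rfl (by omega) le_rfl hm).symm
end
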